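/- arXiv:1804.00394 — 7 statements merged into one kernel-verified Lean document; each statement's English description precedes it below -/
import Mathlib

section
/- Let a be a real-valued random variable with continuous distribution, mean zero and variance one, with CDF F. Then E[a·F(a)]² ≤ 1/12, with equality if and only if a is uniformly distributed on (-√3, √3). -/
/-!
Since the CDF `F` of `a` is continuous, `F` pushes the law of `a` forward to the uniform law on
`[0, 1]`; hence `F(a)` has mean `1/2` and variance `1/12`. As `a` is centred with unit variance,
`c = E[a F(a)]` is the covariance of `F(a)` and `a`, and `Var[F(a) - c a] = 1/12 - c²`. This gives
the bound, and in the case of equality `F(a) = 1/2 + c a` almost surely, so that `a` is the affine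
image `(U - 1/2) / c` of a uniform variable `U` on `[0, 1]`.
-/

open MeasureTheory ProbabilityTheory Set Filter

lemma Real.map_volume_div_sub {c : ℝ} (hc : c ≠ 0) (b : ℝ) :
    volume.map (fun t => (t - b) / c) = ENNReal.ofReal |c| • volume := by
  have : (fun t : ℝ => (t - b) / c) = (fun t => c⁻¹ * t) ∘ (fun t => t - b) := by
    ext t; simp [div_eq_inv_mul]
  rw [this, ← Measure.map_map (measurable_const_mul _) (measurable_sub_const b),
    (measurePreserving_sub_right volume b).map_eq, Real.map_volume_mul_left (inv_ne_zero hc),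
    inv_inv]

lemma Real.map_volume_restrict_preimage_div_sub {c : ℝ} (hc : c ≠ 0) (b : ℝ) {s : Set ℝ}
    (hs : MeasurableSet s) :
    (volume.restrict ((fun t => (t - b) / c) ⁻¹' s)).map (fun t => (t - b) / c) =
      ENNReal.ofReal |c| • volume.restrict s := by
  rw [← Measure.restrict_map (by fun_prop) hs, Real.map_volume_div_sub hc, Measure.restrict_smul]

lemma Real.volume_restrict_Ioc_zero_one_Iic {t : ℝ} (ht : t ∈ Icc 0 1) :
    volume.restrict (Ioc 0 1) (Iic t) = ENNReal.ofReal t := by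
  rw [Measure.restrict_apply measurableSet_Iic, Iic_inter_Ioc_of_le ht.2, Real.volume_Ioc,
    sub_zero]

namespace ProbabilityTheory

lemma variance_sub_covariance_mul {Ω : Type*} [MeasurableSpace Ω] {P : Measure Ω}
    [IsProbabilityMeasure P] {X Y : Ω → ℝ} (hX : MemLp X 2 P) (hY : MemLp Y 2 P)
    (hY1 : Var[Y; P] = 1) :
    Var[fun ω => X ω - cov[X, Y; P] * Y ω; P] = Var[X; P] - cov[X, Y; P] ^ 2 := by
  rw [variance_fun_sub hX (hY.const_mul _), covariance_const_mul_right, variance_const_mul, hY1]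
  ring

section ContinuousCDF

variable {μ : Measure ℝ} [IsProbabilityMeasure μ]

lemma measure_setOf_cdf_le (hμ : Continuous (cdf μ)) {t : ℝ} (ht : t ∈ Icc 0 1) :
    μ {x | cdf μ x ≤ t} = ENNReal.ofReal t := by
  rcases ht.2.eq_or_lt with rfl | ht1
  · simp [cdf_le_one]
  set S := {x | cdf μ x ≤ t}
  rcases S.eq_empty_or_nonempty with hS | hS
  · obtain rfl : 0 = t := by
      refine ht.1.eq_or_lt.resolve_right fun ht0 => ?_
      obtain ⟨x, hx⟩ := ((tendsto_cdf_atBot μ).eventually (gt_mem_nhds ht0)).exists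
      exact hS.subset (le_of_lt hx : x ∈ S)
    simp [hS]
  obtain ⟨x₀, hx₀⟩ :=
    eventually_atTop.mp ((tendsto_cdf_atTop μ).eventually (lt_mem_nhds ht1))
  have hbdd : BddAbove S := ⟨x₀, fun x hx => not_lt.mp fun h => (hx₀ x h.le).not_ge hx⟩
  have hsS : sSup S ∈ S := (isClosed_le hμ continuous_const).csSup_mem hS hbdd
  have hS_eq : S = Iic (sSup S) :=
    ext fun x => ⟨fun hx => le_csSup hbdd hx, fun hx => (monotone_cdf μ hx).trans hsS⟩
  have hts : t ≤ cdf μ (sSup S) := by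
    have hsub : Ioi (sSup S) ⊆ {x | t ≤ cdf μ x} := fun x hx =>
      show t ≤ cdf μ x from le_of_lt (not_le.mp fun h => (lt_csSup_of_lt hbdd h hx).false)
    exact (isClosed_le continuous_const hμ).closure_subset_iff.mpr hsub
      (by rw [closure_Ioi]; exact self_mem_Ici)
  rw [hS_eq, ← ofReal_cdf, le_antisymm hsS hts]

theorem map_cdf_eq_volume_restrict (hμ : Continuous (cdf μ)) :
    μ.map (cdf μ) = volume.restrict (Ioc 0 1) := by
  have : IsProbabilityMeasure (μ.map (cdf μ)) :=
    Measure.isProbabilityMeasure_map (monotone_cdf μ).measurable.aemeasurable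
  refine Measure.ext_of_Iic _ _ fun t => ?_
  rw [Measure.map_apply (monotone_cdf μ).measurable measurableSet_Iic]
  rcases lt_or_ge t 0 with ht0 | ht0
  · have h : cdf μ ⁻¹' Iic t = ∅ :=
      eq_empty_of_forall_notMem fun x hx => (cdf_nonneg μ x).not_gt (lt_of_le_of_lt hx ht0)
    rw [h, measure_empty, Measure.restrict_apply measurableSet_Iic,
      Iic_inter_Ioc_of_le (ht0.trans zero_lt_one).le, Ioc_eq_empty ht0.not_gt, measure_empty]
  rcases le_or_gt t 1 with ht1 | ht1
  · exact (measure_setOf_cdf_le hμ ⟨ht0, ht1⟩).trans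
      (Real.volume_restrict_Ioc_zero_one_Iic ⟨ht0, ht1⟩).symm
  · have h : cdf μ ⁻¹' Iic t = univ :=
      eq_univ_of_forall fun x => (cdf_le_one μ x).trans ht1.le
    rw [h, measure_univ, Measure.restrict_apply measurableSet_Iic,
      inter_eq_right.mpr (Ioc_subset_Iic_self.trans (Iic_subset_Iic.mpr ht1.le)), Real.volume_Ioc]
    norm_num

lemma integral_comp_cdf (hμ : Continuous (cdf μ)) {g : ℝ → ℝ} (hg : Continuous g) :
    ∫ x, g (cdf μ x) ∂μ = ∫ t in (0 : ℝ)..1, g t := by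
  rw [← integral_map (monotone_cdf μ).measurable.aemeasurable hg.aestronglyMeasurable,
    map_cdf_eq_volume_restrict hμ, intervalIntegral.integral_of_le zero_le_one]

lemma integral_cdf (hμ : Continuous (cdf μ)) : ∫ x, cdf μ x ∂μ = 1 / 2 := by
  simpa using integral_comp_cdf hμ continuous_id

lemma integral_cdf_sq (hμ : Continuous (cdf μ)) : ∫ x, cdf μ x ^ 2 ∂μ = 1 / 3 := by
  rw [integral_comp_cdf hμ (continuous_pow 2), integral_pow]
  norm_num

lemma memLp_cdf (p : ENNReal) : MemLp (cdf μ) p μ :=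
  .of_bound (monotone_cdf μ).measurable.aestronglyMeasurable 1 <| .of_forall fun x => by
    rw [Real.norm_of_nonneg (cdf_nonneg μ x)]; exact cdf_le_one μ x

lemma variance_cdf (hμ : Continuous (cdf μ)) : Var[cdf μ; μ] = 1 / 12 := by
  rw [variance_eq_sub (memLp_cdf 2), Pi.pow_def, integral_cdf_sq hμ, integral_cdf hμ]
  norm_num

end ContinuousCDF

/-- The uniform distribution with mean zero and variance one. -/
noncomputable def standardUniform : Measure ℝ :=
  ENNReal.ofReal (1 / (2 * Real.sqrt 3)) • volume.restrict (Ioo (-Real.sqrt 3) (Real.sqrt 3))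

instance : IsProbabilityMeasure standardUniform := by
  constructor
  rw [standardUniform, Measure.smul_apply, Measure.restrict_apply_univ, Real.volume_Ioo,
    smul_eq_mul, ← ENNReal.ofReal_mul (by positivity)]
  field_simp
  norm_num

lemma cdf_standardUniform {x : ℝ} (hx : x ∈ Ioo (-Real.sqrt 3) (Real.sqrt 3)) :
    cdf standardUniform x = (x + Real.sqrt 3) / (2 * Real.sqrt 3) := by
  have hinter : Iic x ∩ Ioo (-Real.sqrt 3) (Real.sqrt 3) = Ioc (-Real.sqrt 3) x := by
    ext y
    simp only [mem_inter_iff, mem_Iic, mem_Ioo, mem_Ioc]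
    constructor
    · rintro ⟨hyx, hy, -⟩; exact ⟨hy, hyx⟩
    · rintro ⟨hy, hyx⟩; exact ⟨hyx, hy, hyx.trans_lt hx.2⟩
  rw [cdf_eq_real, measureReal_def, standardUniform, Measure.smul_apply,
    Measure.restrict_apply measurableSet_Iic, hinter, Real.volume_Ioc, smul_eq_mul,
    ← ENNReal.ofReal_mul (by positivity),
    ENNReal.toReal_ofReal (mul_nonneg (by positivity) (by linarith [hx.1]))]
  ring

lemma map_volume_restrict_Ioc_zero_one_eq_standardUniform {c : ℝ} (hc : c ^ 2 = 1 / 12) :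
    (volume.restrict (Ioc 0 1)).map (fun t => (t - 1 / 2) / c) = standardUniform := by
  have hc0 : c ≠ 0 := by rintro rfl; norm_num at hc
  have habs : |c| = 1 / (2 * Real.sqrt 3) := by
    rw [← Real.sqrt_sq_eq_abs, hc, Real.sqrt_eq_iff_mul_self_eq_of_pos (by positivity)]
    field_simp
    norm_num
  have hpre : (fun t => (t - 1 / 2) / c) ⁻¹' Ioo (-Real.sqrt 3) (Real.sqrt 3) = Ioo 0 1 := by
    ext t
    rw [mem_preimage, mem_Ioo, ← abs_lt, abs_div, habs, div_lt_iff₀ (by positivity),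
      show Real.sqrt 3 * (1 / (2 * Real.sqrt 3)) = 1 / 2 by field_simp, abs_lt, mem_Ioo]
    constructor <;> intro h <;> constructor <;> linarith [h.1, h.2]
  rw [Measure.restrict_congr_set Ioo_ae_eq_Ioc.symm, ← hpre,
    Real.map_volume_restrict_preimage_div_sub hc0 _ measurableSet_Ioo, habs, standardUniform]

lemma eq_standardUniform_of_ae_cdf_sub_mul_eq {μ : Measure ℝ} [IsProbabilityMeasure μ]
    (hμ : Continuous (cdf μ)) {c : ℝ} (hc : c ^ 2 = 1 / 12)
    (h : ∀ᵐ x ∂μ, cdf μ x - c * x = 1 / 2) :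
    μ = standardUniform := by
  have hc0 : c ≠ 0 := by rintro rfl; norm_num at hc
  have hid : id =ᵐ[μ] (fun t => (t - 1 / 2) / c) ∘ cdf μ := by
    filter_upwards [h] with x hx
    rw [id, Function.comp_apply, eq_div_iff hc0]
    linarith
  calc μ = μ.map id := Measure.map_id.symm
    _ = (μ.map (cdf μ)).map (fun t => (t - 1 / 2) / c) := by
      rw [Measure.map_congr hid, Measure.map_map (by fun_prop) (monotone_cdf μ).measurable]
    _ = standardUniform := by
      rw [map_cdf_eq_volume_restrict hμ, map_volume_restrict_Ioc_zero_one_eq_standardUniform hc]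

theorem sq_integral_mul_cdf_le {μ : Measure ℝ} [IsProbabilityMeasure μ]
    (hμ : Continuous (cdf μ)) (h2 : Integrable (fun x => x ^ 2) μ)
    (hmean : ∫ x, x ∂μ = 0) (hvar : ∫ x, x ^ 2 ∂μ = 1) :
    (∫ x, x * cdf μ x ∂μ) ^ 2 ≤ 1 / 12 ∧
      ((∫ x, x * cdf μ x ∂μ) ^ 2 = 1 / 12 ↔ μ = standardUniform) := by
  have hid : MemLp (fun x => x) 2 μ :=
    (memLp_two_iff_integrable_sq aestronglyMeasurable_id).mpr h2
  have hint : Integrable (fun x => x) μ := hid.integrable one_le_two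
  have hvar1 : Var[fun x => x; μ] = 1 := by
    rw [variance_eq_sub hid]; simp [hmean, hvar]
  have hcov : cov[cdf μ, fun x => x; μ] = ∫ x, x * cdf μ x ∂μ := by
    rw [covariance_eq_sub (memLp_cdf 2) hid]; simp [hmean, mul_comm]
  have key := variance_sub_covariance_mul (memLp_cdf 2) hid hvar1
  rw [variance_cdf hμ, hcov] at key
  set c := ∫ x, x * cdf μ x ∂μ with hc_def
  refine ⟨by linarith [variance_nonneg (fun x => cdf μ x - c * x) μ], fun hc => ?_, ?_⟩
  · have hvar0 : Var[fun x => cdf μ x - c * x; μ] = 0 := by rw [key, hc]; norm_num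
    have hmean' : ∫ x, (cdf μ x - c * x) ∂μ = 1 / 2 := by
      rw [integral_sub ((memLp_cdf 1).integrable le_rfl) (hint.const_mul c),
        integral_const_mul, integral_cdf hμ, hmean, mul_zero, sub_zero]
    have hae := ae_eq_integral_of_variance_eq_zero
      (X := fun x => cdf μ x - c * x) ((memLp_cdf 2).sub (hid.const_mul c)) hvar0
    rw [hmean'] at hae
    exact eq_standardUniform_of_ae_cdf_sub_mul_eq hμ hc hae
  · rintro rfl
    have hcdf : ∀ᵐ x ∂standardUniform, x * cdf standardUniform x =
        (2 * Real.sqrt 3)⁻¹ * x ^ 2 + 2⁻¹ * x := by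
      filter_upwards [Measure.ae_smul_measure (ae_restrict_mem measurableSet_Ioo) _] with x hx
      rw [cdf_standardUniform hx]
      field_simp
    have hc : c = (2 * Real.sqrt 3)⁻¹ := by
      rw [hc_def, integral_congr_ae hcdf, integral_add (h2.const_mul _) (hint.const_mul _),
        integral_const_mul, integral_const_mul, hvar, hmean]
      ring
    rw [hc, inv_pow, mul_pow, Real.sq_sqrt zero_le_three]
    norm_num

end ProbabilityTheory

theorem sq_expectation_mul_cdf_le_general
    {Ω : Type*} [MeasureSpace Ω] [IsProbabilityMeasure (ℙ : Measure Ω)]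
    (a : Ω → ℝ) (ha : Measurable a)
    (hcont : Continuous fun x => cdf (Measure.map a ℙ) x)
    (hmean : ∫ ω, a ω = 0)
    (hint2 : Integrable (fun ω => (a ω) ^ 2) ℙ) (hvar : ∫ ω, (a ω) ^ 2 = 1) :
    (∫ ω, a ω * cdf (Measure.map a ℙ) (a ω)) ^ 2 ≤ 1 / 12 ∧
    ((∫ ω, a ω * cdf (Measure.map a ℙ) (a ω)) ^ 2 = 1 / 12 ↔
      Measure.map a ℙ =
        ENNReal.ofReal (1 / (2 * Real.sqrt 3)) •
          volume.restrict (Set.Ioo (-Real.sqrt 3) (Real.sqrt 3))) := by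
  have : IsProbabilityMeasure (Measure.map a ℙ) :=
    Measure.isProbabilityMeasure_map ha.aemeasurable
  have hmap {g : ℝ → ℝ} (hg : Continuous g) :
      ∫ x, g x ∂(Measure.map a ℙ) = ∫ ω, g (a ω) :=
    integral_map ha.aemeasurable hg.aestronglyMeasurable
  rw [← hmap (g := fun x => x * cdf (Measure.map a ℙ) x) (by fun_prop)]
  exact sq_integral_mul_cdf_le hcont
    ((integrable_map_measure (by fun_prop) ha.aemeasurable).mpr hint2)
    ((hmap continuous_id).trans hmean) ((hmap (continuous_pow 2)).trans hvar)

/-- If `a` is a real random variable with continuous distribution, mean zero and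
variance one, and `F` is its CDF, then `E[a·F(a)]² ≤ 1/12`, with equality iff `a`
is uniform on `(-√3, √3)`. -/
theorem sq_expectation_mul_cdf_le
    {Ω : Type*} [MeasureSpace Ω] [IsProbabilityMeasure (ℙ : Measure Ω)]
    (a : Ω → ℝ) (ha : Measurable a)
    (hcont : Continuous fun x => cdf (Measure.map a ℙ) x)
    (hint : Integrable a ℙ) (hmean : ∫ ω, a ω = 0)
    (hint2 : Integrable (fun ω => (a ω) ^ 2) ℙ) (hvar : ∫ ω, (a ω) ^ 2 = 1) :
    (∫ ω, a ω * cdf (Measure.map a ℙ) (a ω)) ^ 2 ≤ 1 / 12 ∧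
    ((∫ ω, a ω * cdf (Measure.map a ℙ) (a ω)) ^ 2 = 1 / 12 ↔
      Measure.map a ℙ =
        ENNReal.ofReal (1 / (2 * Real.sqrt 3)) •
          volume.restrict (Set.Ioo (-Real.sqrt 3) (Real.sqrt 3))) :=
  sq_expectation_mul_cdf_le_general a ha hcont hmean hint2 hvar
end

section
/- The series identity π = ∑_{k≥0} (1/(2^{2k-1}(2k+1))) · C(2k,k) holds, where C(2k,k) is the central binomial coefficient. -/
set_option maxHeartbeats 1000000

open Finset Real

noncomputable def cc (k : ℕ) : ℝ := (Nat.choose (2 * k) k : ℝ) / 4 ^ k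

lemma cc_zero : cc 0 = 1 := by simp [cc]

lemma cc_pos (k : ℕ) : 0 < cc k := by
  apply div_pos _ (by positivity)
  exact_mod_cast Nat.choose_pos (by omega)

lemma cc_rec (k : ℕ) : (2 * (k : ℝ) + 2) * cc (k + 1) = (2 * k + 1) * cc k := by
  have h := Nat.succ_mul_centralBinom_succ k
  simp only [Nat.centralBinom] at h
  have h' : ((k + 1) * Nat.choose (2 * (k+1)) (k+1) : ℝ)
      = 2 * (2 * k + 1) * Nat.choose (2 * k) k := by exact_mod_cast congrArg Nat.cast h
  simp only [cc]
  field_simp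
  push_cast at h' ⊢
  linear_combination (2 * (4:ℝ)^k) * h'

lemma cc_le_one (k : ℕ) : cc k ≤ 1 := by
  induction k with
  | zero => simp [cc]
  | succ n ih =>
    have h := cc_rec n
    have hp : (0:ℝ) < 2 * n + 2 := by positivity
    have : cc (n+1) = (2*n+1)/(2*n+2) * cc n := by field_simp; linarith [h]
    rw [this]
    calc (2*(n:ℝ)+1)/(2*n+2) * cc n ≤ 1 * 1 := by
          apply mul_le_mul _ ih (cc_pos n).le zero_le_one
          rw [div_le_one hp]; linarith
      _ = 1 := one_mul 1

lemma cc_conv : ∀ n : ℕ, ∑ k ∈ range (n + 1), cc k * cc (n - k) = 1 := by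
  intro n
  induction n with
  | zero => simp [cc_zero]
  | succ n ih =>
    set S1 := ∑ k ∈ range (n + 2), cc k * cc (n + 1 - k) with hS1
    set A := ∑ k ∈ range (n + 2), (2 * (k : ℝ)) * (cc k * cc (n + 1 - k)) with hA
    have reflA : A = ∑ k ∈ range (n + 2),
        (2 * ((n + 1 - k : ℕ) : ℝ)) * (cc (n + 1 - k) * cc k) := by
      rw [hA, ← Finset.sum_range_reflect]
      apply Finset.sum_congr rfl
      intro k hk
      rw [Finset.mem_range] at hk
      have h1 : n + 2 - 1 - k = n + 1 - k := by omega
      have h2 : n + 1 - (n + 1 - k) = k := by omega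
      rw [h1, h2]
    have twoA : 2 * A = (2 * (n : ℝ) + 2) * S1 := by
      have : A + A = ∑ k ∈ range (n + 2),
          ((2 * (k : ℝ)) + 2 * ((n + 1 - k : ℕ) : ℝ)) * (cc k * cc (n + 1 - k)) := by
        nth_rewrite 2 [reflA]
        rw [hA, ← Finset.sum_add_distrib]
        apply Finset.sum_congr rfl
        intro k hk
        ring
      rw [two_mul, this, hS1, Finset.mul_sum]
      apply Finset.sum_congr rfl
      intro k hk
      rw [Finset.mem_range] at hk
      have : ((n + 1 - k : ℕ) : ℝ) = (n : ℝ) + 1 - k := by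
        have : k ≤ n + 1 := by omega
        push_cast [Nat.cast_sub this]; ring
      rw [this]; ring
    set B := ∑ i ∈ range (n + 1), (2 * (i : ℝ) + 1) * (cc i * cc (n - i)) with hB
    have hAB : A = B := by
      rw [hA, Finset.sum_range_succ' (fun k => (2 * (k : ℝ)) * (cc k * cc (n + 1 - k))) (n + 1)]
      simp only [Nat.cast_zero, mul_zero, zero_mul, add_zero]
      apply Finset.sum_congr rfl
      intro i hi
      have h1 : n + 1 - (i + 1) = n - i := by omega
      have h2 : (2 * (i : ℝ) + 2) * cc (i + 1) = (2 * i + 1) * cc i := cc_rec i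
      rw [h1]
      push_cast
      calc (2 * ((i : ℝ) + 1)) * (cc (i + 1) * cc (n - i))
          = ((2 * (i : ℝ) + 2) * cc (i + 1)) * cc (n - i) := by ring
        _ = ((2 * (i : ℝ) + 1) * cc i) * cc (n - i) := by rw [h2]
        _ = (2 * (i : ℝ) + 1) * (cc i * cc (n - i)) := by ring
    have reflB : B = ∑ i ∈ range (n + 1),
        (2 * ((n - i : ℕ) : ℝ) + 1) * (cc (n - i) * cc i) := by
      rw [hB, ← Finset.sum_range_reflect]
      apply Finset.sum_congr rfl
      intro i hi
      rw [Finset.mem_range] at hi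
      have h1 : n + 1 - 1 - i = n - i := by omega
      have h2 : n - (n - i) = i := by omega
      rw [h1, h2]
    have twoB : 2 * B = (2 * (n : ℝ) + 2) * (∑ k ∈ range (n + 1), cc k * cc (n - k)) := by
      have : B + B = ∑ i ∈ range (n + 1),
          ((2 * (i : ℝ) + 1) + (2 * ((n - i : ℕ) : ℝ) + 1)) * (cc i * cc (n - i)) := by
        nth_rewrite 2 [reflB]
        rw [hB, ← Finset.sum_add_distrib]
        apply Finset.sum_congr rfl
        intro i hi
        ring
      rw [two_mul, this, Finset.mul_sum]
      apply Finset.sum_congr rfl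
      intro i hi
      rw [Finset.mem_range] at hi
      have : ((n - i : ℕ) : ℝ) = (n : ℝ) - i := by
        have : i ≤ n := by omega
        push_cast [Nat.cast_sub this]; ring
      rw [this]; ring
    have hpos : (2 * (n : ℝ) + 2) ≠ 0 := by positivity
    have : (2 * (n : ℝ) + 2) * S1 = (2 * (n : ℝ) + 2) * 1 := by
      rw [← twoA, hAB, twoB, ih]
    exact mul_left_cancel₀ hpos this

lemma summable_cc {t : ℝ} (ht0 : 0 ≤ t) (ht1 : t < 1) :
    Summable (fun k : ℕ => cc k * t ^ k) := by
  apply Summable.of_nonneg_of_le (fun k => mul_nonneg (cc_pos _).le (pow_nonneg ht0 _))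
    (fun k => ?_) (summable_geometric_of_lt_one ht0 ht1)
  calc cc k * t ^ k ≤ 1 * t ^ k := by
        apply mul_le_mul_of_nonneg_right (cc_le_one k) (by positivity)
    _ = t ^ k := one_mul _

lemma hasSum_cc {t : ℝ} (ht0 : 0 ≤ t) (ht1 : t < 1) :
    HasSum (fun k : ℕ => cc k * t ^ k) (1 / Real.sqrt (1 - t)) := by
  have hsum := summable_cc ht0 ht1
  set g : ℝ := ∑' k : ℕ, cc k * t ^ k with hg
  have hnorm : Summable fun k : ℕ => ‖cc k * t ^ k‖ := by
    simpa [Real.norm_eq_abs, abs_of_nonneg, (cc_pos _).le, ht0,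
      abs_of_nonneg (mul_nonneg (cc_pos _).le (pow_nonneg ht0 _))] using hsum
  have hsq : g * g = (1 - t)⁻¹ := by
    rw [hg, tsum_mul_tsum_eq_tsum_sum_range_of_summable_norm hnorm hnorm]
    have : ∀ n : ℕ, ∑ k ∈ range (n + 1), (cc k * t ^ k) * (cc (n - k) * t ^ (n - k))
        = t ^ n := by
      intro n
      have : ∀ k ∈ range (n + 1), (cc k * t ^ k) * (cc (n - k) * t ^ (n - k))
          = (cc k * cc (n - k)) * t ^ n := by
        intro k hk
        rw [Finset.mem_range] at hk
        have : t ^ k * t ^ (n - k) = t ^ n := by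
          rw [← pow_add]; congr 1; omega
        calc (cc k * t ^ k) * (cc (n - k) * t ^ (n - k))
            = (cc k * cc (n - k)) * (t ^ k * t ^ (n - k)) := by ring
          _ = (cc k * cc (n - k)) * t ^ n := by rw [this]
      rw [Finset.sum_congr rfl this, ← Finset.sum_mul, cc_conv n, one_mul]
    rw [tsum_congr this, tsum_geometric_of_lt_one ht0 ht1]
  have hgpos : 0 < g := by
    have h0 : cc 0 * t ^ 0 ≤ g := Summable.le_tsum hsum 0 (fun k _ => mul_nonneg (cc_pos _).le (pow_nonneg ht0 _))
    simp [cc_zero] at h0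
    linarith
  have h1t : 0 < 1 - t := by linarith
  have : g = 1 / Real.sqrt (1 - t) := by
    have : g = Real.sqrt (g * g) := by
      rw [Real.sqrt_mul_self hgpos.le]
    rw [this, hsq, Real.sqrt_inv, one_div]
  rw [← this]
  exact hsum.hasSum

lemma sqrt_one_sub_sq_pos {b x : ℝ} (hb1 : b < 1) (hx : x ∈ Set.Icc 0 b) :
    0 < Real.sqrt (1 - x ^ 2) := by
  apply Real.sqrt_pos.mpr
  nlinarith [hx.1, hx.2]

lemma contOn_inv_sqrt {b : ℝ} (hb0 : 0 ≤ b) (hb1 : b < 1) :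
    ContinuousOn (fun x : ℝ => 1 / Real.sqrt (1 - x ^ 2)) (Set.Icc 0 b) := by
  apply ContinuousOn.div continuousOn_const
  · exact (Real.continuous_sqrt.comp (by continuity)).continuousOn
  · exact fun x hx => (sqrt_one_sub_sq_pos hb1 hx).ne'

lemma integral_arcsin {b : ℝ} (hb0 : 0 ≤ b) (hb1 : b < 1) :
    ∫ x in (0:ℝ)..b, 1 / Real.sqrt (1 - x ^ 2) = Real.arcsin b := by
  have huIcc : Set.uIcc (0:ℝ) b = Set.Icc 0 b := Set.uIcc_of_le hb0
  have h := intervalIntegral.integral_eq_sub_of_hasDerivAt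
    (f := Real.arcsin) (f' := fun x : ℝ => 1 / Real.sqrt (1 - x ^ 2))
    (a := 0) (b := b) ?_ ?_
  · rw [h, Real.arcsin_zero, sub_zero]
  · intro x hx
    rw [huIcc] at hx
    exact Real.hasDerivAt_arcsin (by nlinarith [hx.1, hx.2]) (by nlinarith [hx.1, hx.2])
  · rw [intervalIntegrable_iff_integrableOn_Icc_of_le hb0]
    exact (contOn_inv_sqrt hb0 hb1).integrableOn_compact isCompact_Icc

noncomputable def aa (k : ℕ) : ℝ := 2 * cc k / (2 * k + 1)

lemma aa_nonneg (k : ℕ) : 0 ≤ aa k := by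
  have := cc_pos k
  unfold aa
  positivity

lemma pn_intable {b : ℝ} (n : ℕ) :
    IntervalIntegrable (fun x : ℝ => ∑ k ∈ Finset.range n, 2 * cc k * x ^ (2 * k))
      MeasureTheory.volume 0 b :=
  (continuous_finset_sum _ fun k _ => by continuity).intervalIntegrable 0 b

lemma Q_eq_integral {b : ℝ} (n : ℕ) :
    ∑ k ∈ Finset.range n, 2 * cc k * b ^ (2 * k + 1) / (2 * k + 1)
      = ∫ x in (0:ℝ)..b, ∑ k ∈ Finset.range n, 2 * cc k * x ^ (2 * k) := by
  rw [intervalIntegral.integral_finset_sum]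
  · apply Finset.sum_congr rfl
    intro k _
    rw [intervalIntegral.integral_const_mul, integral_pow]
    push_cast
    ring
  · intro k _
    exact (by continuity : Continuous fun x : ℝ => 2 * cc k * x ^ (2 * k)).intervalIntegrable 0 b

lemma pn_le {b x : ℝ} (hb1 : b < 1) (hx : x ∈ Set.Icc 0 b) (n : ℕ) :
    ∑ k ∈ Finset.range n, 2 * cc k * x ^ (2 * k) ≤ 2 * (1 / Real.sqrt (1 - x ^ 2)) := by
  have hx2 : x ^ 2 < 1 := by nlinarith [hx.1, hx.2]
  have hx0 : 0 ≤ x ^ 2 := sq_nonneg x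
  have hs := hasSum_cc hx0 hx2
  have key : ∑ k ∈ Finset.range n, cc k * (x ^ 2) ^ k ≤ 1 / Real.sqrt (1 - x ^ 2) := by
    exact sum_le_hasSum _ (fun k _ => mul_nonneg (cc_pos k).le (pow_nonneg hx0 _)) hs
  calc ∑ k ∈ Finset.range n, 2 * cc k * x ^ (2 * k)
      = 2 * ∑ k ∈ Finset.range n, cc k * (x ^ 2) ^ k := by
        rw [Finset.mul_sum]; apply Finset.sum_congr rfl; intro k _
        rw [← pow_mul]; ring
    _ ≤ 2 * (1 / Real.sqrt (1 - x ^ 2)) := by linarith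

lemma tail_le {b x : ℝ} (hb1 : b < 1) (hx : x ∈ Set.Icc 0 b) (hb0 : 0 ≤ b) (n : ℕ) :
    2 * (1 / Real.sqrt (1 - x ^ 2)) - ∑ k ∈ Finset.range n, 2 * cc k * x ^ (2 * k)
      ≤ 2 * b ^ (2 * n) / (1 - b ^ 2) := by
  have hx2 : x ^ 2 < 1 := by nlinarith [hx.1, hx.2]
  have hb2 : b ^ 2 < 1 := by nlinarith
  have hx0 : 0 ≤ x ^ 2 := sq_nonneg x
  have hs := summable_cc hx0 hx2
  have htsum := (hasSum_cc hx0 hx2).tsum_eq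
  have hsplit := Summable.sum_add_tsum_nat_add (f := fun k => cc k * (x ^ 2) ^ k) n hs
  have htail_le : ∑' k : ℕ, cc (k + n) * (x ^ 2) ^ (k + n)
      ≤ b ^ (2 * n) / (1 - b ^ 2) := by
    have h1 : ∀ k : ℕ, cc (k + n) * (x ^ 2) ^ (k + n) ≤ (b ^ 2) ^ n * (x ^ 2) ^ k := by
      intro k
      have : (x ^ 2) ^ (k + n) = (x ^ 2) ^ n * (x ^ 2) ^ k := by
        rw [← pow_add, add_comm]
      rw [this]
      have hxb : (x ^ 2) ^ n ≤ (b ^ 2) ^ n := by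
        apply pow_le_pow_left₀ hx0
        nlinarith [hx.1, hx.2]
      calc cc (k + n) * ((x ^ 2) ^ n * (x ^ 2) ^ k)
          ≤ 1 * ((x ^ 2) ^ n * (x ^ 2) ^ k) := by
            apply mul_le_mul_of_nonneg_right (cc_le_one _) (by positivity)
        _ = (x ^ 2) ^ n * (x ^ 2) ^ k := one_mul _
        _ ≤ (b ^ 2) ^ n * (x ^ 2) ^ k := by
            apply mul_le_mul_of_nonneg_right hxb (by positivity)
    have h2 : Summable fun k : ℕ => (b ^ 2) ^ n * (x ^ 2) ^ k :=
      (summable_geometric_of_lt_one hx0 hx2).mul_left _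
    calc ∑' k : ℕ, cc (k + n) * (x ^ 2) ^ (k + n)
        ≤ ∑' k : ℕ, (b ^ 2) ^ n * (x ^ 2) ^ k := by
          apply Summable.tsum_le_tsum h1 ((summable_nat_add_iff n).mpr hs) h2
      _ = (b ^ 2) ^ n * (1 - x ^ 2)⁻¹ := by
          rw [tsum_mul_left, tsum_geometric_of_lt_one hx0 hx2]
      _ ≤ b ^ (2 * n) / (1 - b ^ 2) := by
          rw [← pow_mul, div_eq_mul_inv]
          apply mul_le_mul_of_nonneg_left _ (by positivity)
          apply inv_anti₀ (by linarith)
          nlinarith [hx.1, hx.2]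
  have heq : 1 / Real.sqrt (1 - x ^ 2) - ∑ k ∈ Finset.range n, cc k * (x ^ 2) ^ k
      = ∑' k : ℕ, cc (k + n) * (x ^ 2) ^ (k + n) := by
    rw [← htsum]
    linarith [hsplit]
  have hrw : ∑ k ∈ Finset.range n, 2 * cc k * x ^ (2 * k)
      = 2 * ∑ k ∈ Finset.range n, cc k * (x ^ 2) ^ k := by
    rw [Finset.mul_sum]; apply Finset.sum_congr rfl; intro k _
    rw [← pow_mul]; ring
  rw [hrw]
  have h3 : 1 / Real.sqrt (1 - x ^ 2) - ∑ k ∈ Finset.range n, cc k * (x ^ 2) ^ k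
      ≤ b ^ (2 * n) / (1 - b ^ 2) := heq ▸ htail_le
  rw [mul_div_assoc]
  linarith

lemma intable2 {b : ℝ} (hb0 : 0 ≤ b) (hb1 : b < 1) :
    IntervalIntegrable (fun x : ℝ => 2 * (1 / Real.sqrt (1 - x ^ 2)))
      MeasureTheory.volume 0 b := by
  rw [intervalIntegrable_iff_integrableOn_Icc_of_le hb0]
  exact (continuousOn_const.mul (contOn_inv_sqrt hb0 hb1)).integrableOn_compact isCompact_Icc

lemma Q_le {b : ℝ} (hb0 : 0 ≤ b) (hb1 : b < 1) (n : ℕ) :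
    ∑ k ∈ Finset.range n, 2 * cc k * b ^ (2 * k + 1) / (2 * k + 1)
      ≤ 2 * Real.arcsin b := by
  rw [Q_eq_integral]
  have h2 : (∫ x in (0:ℝ)..b, 2 * (1 / Real.sqrt (1 - x ^ 2))) = 2 * Real.arcsin b := by
    rw [intervalIntegral.integral_const_mul, integral_arcsin hb0 hb1]
  rw [← h2]
  exact intervalIntegral.integral_mono_on hb0 (pn_intable n) (intable2 hb0 hb1)
    (fun x hx => pn_le hb1 hx n)

lemma Q_ge {b : ℝ} (hb0 : 0 ≤ b) (hb1 : b < 1) (n : ℕ) :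
    2 * Real.arcsin b - 2 * b ^ (2 * n) / (1 - b ^ 2) * b
      ≤ ∑ k ∈ Finset.range n, 2 * cc k * b ^ (2 * k + 1) / (2 * k + 1) := by
  rw [Q_eq_integral]
  have hsub : IntervalIntegrable
      (fun x : ℝ => 2 * (1 / Real.sqrt (1 - x ^ 2))
        - ∑ k ∈ Finset.range n, 2 * cc k * x ^ (2 * k)) MeasureTheory.volume 0 b :=
    (intable2 hb0 hb1).sub (pn_intable n)
  have hmono : (∫ x in (0:ℝ)..b, (2 * (1 / Real.sqrt (1 - x ^ 2))
        - ∑ k ∈ Finset.range n, 2 * cc k * x ^ (2 * k)))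
      ≤ ∫ _x in (0:ℝ)..b, 2 * b ^ (2 * n) / (1 - b ^ 2) := by
    apply intervalIntegral.integral_mono_on hb0 hsub intervalIntegrable_const
    intro x hx
    exact tail_le hb1 hx hb0 n
  rw [intervalIntegral.integral_sub (intable2 hb0 hb1) (pn_intable n),
    intervalIntegral.integral_const_mul, integral_arcsin hb0 hb1,
    intervalIntegral.integral_const, smul_eq_mul, sub_zero] at hmono
  linarith

open Filter in
theorem ramanujan_pi_series' : HasSum aa Real.pi := by
  apply hasSum_of_isLUB_of_nonneg _ aa_nonneg
  constructor
  · rintro x ⟨s, rfl⟩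
    obtain ⟨n, hn⟩ := s.exists_nat_subset_range
    refine (Finset.sum_le_sum_of_subset_of_nonneg hn (fun k _ _ => aa_nonneg k)).trans ?_
    have key : ∀ b ∈ Set.Ioo (0:ℝ) 1,
        ∑ k ∈ Finset.range n, 2 * cc k * b ^ (2 * k + 1) / (2 * k + 1) ≤ Real.pi := by
      intro b hb
      refine (Q_le hb.1.le hb.2 n).trans ?_
      have := Real.arcsin_le_pi_div_two b
      linarith
    set q : ℝ → ℝ := fun b => ∑ k ∈ Finset.range n, 2 * cc k * b ^ (2 * k + 1) / (2 * k + 1)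
      with hqdef
    have hcont : Continuous q := by
      apply continuous_finset_sum
      intro k _
      exact ((continuous_const.mul (continuous_pow (2 * k + 1))).div_const _)
    have hq1 : q 1 = ∑ k ∈ Finset.range n, aa k := by
      simp [hqdef, aa]
    have hne : (nhdsWithin (1:ℝ) (Set.Ioo 0 1)).NeBot := by
      apply mem_closure_iff_nhdsWithin_neBot.mp
      rw [closure_Ioo (by norm_num : (0:ℝ) ≠ 1)]
      exact ⟨by norm_num, le_refl 1⟩
    have htd : Tendsto q (nhdsWithin (1:ℝ) (Set.Ioo 0 1)) (nhds (q 1)) :=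
      (hcont.tendsto 1).mono_left nhdsWithin_le_nhds
    have := le_of_tendsto htd (eventually_nhdsWithin_of_forall key)
    rw [hq1] at this
    exact this
  · intro w hw
    have hbd : ∀ b ∈ Set.Ioo (0:ℝ) 1, 2 * Real.arcsin b ≤ w := by
      intro b hb
      obtain ⟨hb0, hb1⟩ := hb
      have hb2 : b ^ 2 < 1 := by nlinarith
      have h1 : ∀ n : ℕ, 2 * Real.arcsin b - 2 * b ^ (2 * n) / (1 - b ^ 2) * b ≤ w := by
        intro n
        have hQ := Q_ge hb0.le hb1 n
        have h2 : ∑ k ∈ Finset.range n, 2 * cc k * b ^ (2 * k + 1) / (2 * k + 1)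
            ≤ ∑ k ∈ Finset.range n, aa k := by
          apply Finset.sum_le_sum
          intro k _
          unfold aa
          apply div_le_div_of_nonneg_right ?_ (by positivity)
          calc 2 * cc k * b ^ (2 * k + 1) ≤ 2 * cc k * 1 :=
                mul_le_mul_of_nonneg_left (pow_le_one₀ hb0.le hb1.le)
                  (by nlinarith [cc_pos k])
            _ = 2 * cc k := mul_one _
        have h3 : ∑ k ∈ Finset.range n, aa k ≤ w := hw ⟨Finset.range n, rfl⟩
        linarith
      have hfun : (fun n : ℕ => 2 * Real.arcsin b - 2 * b ^ (2 * n) / (1 - b ^ 2) * b)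
          = fun n : ℕ => 2 * Real.arcsin b - (b ^ 2) ^ n * (2 / (1 - b ^ 2) * b) := by
        funext n
        rw [← pow_mul]
        ring
      have hlim : Tendsto (fun n : ℕ => 2 * Real.arcsin b - 2 * b ^ (2 * n) / (1 - b ^ 2) * b)
          atTop (nhds (2 * Real.arcsin b)) := by
        rw [hfun]
        have h0 : Tendsto (fun n : ℕ => (b ^ 2) ^ n * (2 / (1 - b ^ 2) * b)) atTop (nhds 0) := by
          have := (tendsto_pow_atTop_nhds_zero_of_lt_one (by positivity) hb2).mul_const
            (2 / (1 - b ^ 2) * b)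
          simpa using this
        have := h0.const_sub (2 * Real.arcsin b)
        simpa using this
      exact le_of_tendsto hlim (Filter.Eventually.of_forall h1)
    have harc : Tendsto (fun b : ℝ => 2 * Real.arcsin b)
        (nhdsWithin (1:ℝ) (Set.Ioo 0 1)) (nhds Real.pi) := by
      have : Tendsto (fun b : ℝ => 2 * Real.arcsin b) (nhds 1)
          (nhds (2 * Real.arcsin 1)) :=
        (continuous_const.mul Real.continuous_arcsin).tendsto 1
      rw [Real.arcsin_one] at this
      have hpi : 2 * (Real.pi / 2) = Real.pi := by ring
      rw [hpi] at this
      exact this.mono_left nhdsWithin_le_nhds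
    have hne : (nhdsWithin (1:ℝ) (Set.Ioo 0 1)).NeBot := by
      apply mem_closure_iff_nhdsWithin_neBot.mp
      rw [closure_Ioo (by norm_num : (0:ℝ) ≠ 1)]
      exact ⟨by norm_num, le_refl 1⟩
    exact le_of_tendsto harc (eventually_nhdsWithin_of_forall hbd)

/-- Ramanujan's identity: `π = ∑_{k≥0} (1/(2^{2k-1}(2k+1))) · C(2k,k)`. -/
theorem ramanujan_pi_series :
    HasSum (fun k : ℕ =>
      (1 / ((2 : ℝ) ^ (2 * (k : ℤ) - 1) * (2 * (k : ℝ) + 1))) *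
        (Nat.choose (2 * k) k : ℝ)) Real.pi := by
  have hfun : (fun k : ℕ =>
      (1 / ((2 : ℝ) ^ (2 * (k : ℤ) - 1) * (2 * (k : ℝ) + 1))) *
        (Nat.choose (2 * k) k : ℝ)) = aa := by
    funext k
    have h2 : (2 : ℝ) ^ (2 * (k : ℤ) - 1) = 4 ^ k / 2 := by
      rw [zpow_sub₀ (two_ne_zero), zpow_one]
      congr 1
      rw [show (2 * (k : ℤ)) = ((2 * k : ℕ) : ℤ) by push_cast; ring, zpow_natCast, pow_mul]
      norm_num
    rw [h2]
    unfold aa cc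
    have h4 : (0:ℝ) < 4 ^ k := by positivity
    have hk : (0:ℝ) < 2 * (k:ℝ) + 1 := by positivity
    field_simp
  rw [hfun]
  exact ramanujan_pi_series'
end

section
/- The series identity π = ∑_{q≥0} (3/((2q+1)·2^{4q})) · C(2q,q) holds, where C(2q,q) is the central binomial coefficient. -/
/-!
Since `arcsin (1/2) = π/6`, it suffices to expand `arcsin` in a power series. Its derivative
`(1 - x²)^(-1/2)` is given by the binomial series, whose `n`-th coefficient
`(1/2)(3/2)⋯((2n-1)/2)/n!` equals `C(2n,n)/4ⁿ ≤ 1`; on `[0, r]` with `|r| < 1` the series is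
dominated by the geometric series `∑ (r²)ⁿ`, so it may be integrated term by term.
-/

open Real Nat Polynomial

lemma ascPochhammer_eval_one_half_mul (n : ℕ) :
    (ascPochhammer ℝ n).eval (1 / 2) * (4 ^ n * n !) = (2 * n)! := by
  induction n with
  | zero => simp
  | succ n ih =>
    rw [ascPochhammer_succ_eval, show 2 * (n + 1) = 2 * n + 1 + 1 by ring, factorial_succ,
      factorial_succ, factorial_succ]
    push_cast [← ih]
    ring

lemma Ring.multichoose_one_half (n : ℕ) :
    Ring.multichoose (1 / 2 : ℝ) n = (2 * n).choose n / 4 ^ n := by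
  have h := Ring.factorial_nsmul_multichoose_eq_ascPochhammer (1 / 2 : ℝ) n
  rw [ascPochhammer_smeval_eq_eval, nsmul_eq_mul] at h
  have hc := Nat.choose_mul_factorial_mul_factorial (show n ≤ 2 * n by omega)
  rw [show 2 * n - n = n by omega] at hc
  rw [eq_div_iff (by positivity)]
  refine mul_left_cancel₀ (by positivity : ((n ! * n ! : ℕ) : ℝ) ≠ 0) ?_
  calc _ = (ascPochhammer ℝ n).eval (1 / 2) * (4 ^ n * n !) := by push_cast [← h]; ring
    _ = _ := by rw [ascPochhammer_eval_one_half_mul, ← hc]; push_cast; ring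

theorem Real.hasSum_inv_sqrt_one_sub {x : ℝ} (hx : |x| < 1) :
    HasSum (fun n : ℕ => ((2 * n).choose n / 4 ^ n : ℝ) * x ^ n) (√(1 - x))⁻¹ := by
  have h := (one_div_one_sub_rpow_hasFPowerSeriesOnBall_zero (1 / 2)).hasSum (y := x) (by
    simpa [enorm_eq_nnnorm, ← NNReal.coe_lt_coe] using hx)
  simp only [FormalMultilinearSeries.ofScalars_apply_eq, ← Ring.multichoose_eq,
    Ring.multichoose_one_half, smul_eq_mul, zero_add] at h
  simpa [sqrt_eq_rpow] using h

theorem Real.hasSum_inv_sqrt_one_sub_sq {x : ℝ} (hx : |x| < 1) :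
    HasSum (fun n : ℕ => ((2 * n).choose n / 4 ^ n : ℝ) * x ^ (2 * n)) (√(1 - x ^ 2))⁻¹ := by
  have hx2 : |x ^ 2| < 1 := by
    rw [abs_of_nonneg (sq_nonneg x)]; exact (sq_lt_one_iff_abs_lt_one x).2 hx
  simpa [pow_mul] using hasSum_inv_sqrt_one_sub hx2

theorem integral_inv_sqrt_one_sub_sq {a b : ℝ} (ha : a ∈ Set.Ioo (-1) 1)
    (hb : b ∈ Set.Ioo (-1) 1) :
    ∫ x in a..b, (√(1 - x ^ 2))⁻¹ = arcsin b - arcsin a := by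
  have hab : Set.uIcc a b ⊆ Set.Ioo (-1) 1 := Set.ordConnected_Ioo.uIcc_subset ha hb
  have hpos : ∀ x ∈ Set.uIcc a b, 0 < 1 - x ^ 2 := fun x hx => by
    obtain ⟨h1, h2⟩ := hab hx; nlinarith
  refine intervalIntegral.integral_eq_sub_of_hasDerivAt (fun x hx => ?_) ?_
  · obtain ⟨h1, h2⟩ := hab hx
    simpa using hasDerivAt_arcsin h1.ne' h2.ne
  · exact ContinuousOn.intervalIntegrable <|
      ContinuousOn.inv₀ (by fun_prop) fun x hx => (sqrt_pos.2 (hpos x hx)).ne'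

theorem Real.hasSum_arcsin {r : ℝ} (hr : |r| < 1) :
    HasSum (fun n : ℕ => ((2 * n).choose n / 4 ^ n : ℝ) * (r ^ (2 * n + 1) / (2 * n + 1)))
      (arcsin r) := by
  have hcoeff_le_one (n : ℕ) : ((2 * n).choose n / 4 ^ n : ℝ) ≤ 1 :=
    div_le_one_of_le₀ (by exact_mod_cast Nat.centralBinom_le_four_pow n) (by positivity)
  have hr2 : r ^ 2 < 1 := (sq_lt_one_iff_abs_lt_one r).2 hr
  have hsq_le : ∀ t ∈ Set.uIoc 0 r, t ^ 2 ≤ r ^ 2 := fun t ht => by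
    rcases Set.mem_uIoc.1 ht with ⟨h1, h2⟩ | ⟨h1, h2⟩ <;> nlinarith
  have hterm (n : ℕ) : ∫ x in (0 : ℝ)..r, ((2 * n).choose n / 4 ^ n : ℝ) * x ^ (2 * n) =
      ((2 * n).choose n / 4 ^ n : ℝ) * (r ^ (2 * n + 1) / (2 * n + 1)) := by
    rw [intervalIntegral.integral_const_mul, integral_pow]; push_cast; ring_nf
  have hsum := intervalIntegral.hasSum_integral_of_dominated_convergence
    (F := fun (n : ℕ) (x : ℝ) => ((2 * n).choose n / 4 ^ n : ℝ) * x ^ (2 * n))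
    (f := fun x => (√(1 - x ^ 2))⁻¹) (μ := MeasureTheory.volume) (a := 0) (b := r)
    (fun n _ => (r ^ 2) ^ n) (fun n => by fun_prop) ?_ ?_ intervalIntegrable_const ?_
  · have h0 : (0 : ℝ) ∈ Set.Ioo (-1) 1 := by norm_num
    simpa [hterm, integral_inv_sqrt_one_sub_sq h0 (abs_lt.1 hr)] using hsum
  · refine fun n => Filter.Eventually.of_forall fun t ht => ?_
    rw [norm_mul, norm_pow, Real.norm_eq_abs, Real.norm_eq_abs, abs_of_nonneg (by positivity),
      pow_mul, ← abs_pow, abs_of_nonneg (sq_nonneg t)]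
    exact (mul_le_of_le_one_left (by positivity) (hcoeff_le_one n)).trans
      (pow_le_pow_left₀ (sq_nonneg t) (hsq_le t ht) n)
  · exact Filter.Eventually.of_forall fun _ _ => summable_geometric_of_lt_one (sq_nonneg r) hr2
  · refine Filter.Eventually.of_forall fun t ht => hasSum_inv_sqrt_one_sub_sq ?_
    exact (sq_lt_one_iff_abs_lt_one t).1 ((hsq_le t ht).trans_lt hr2)

theorem Real.arcsin_one_half : arcsin (1 / 2) = π / 6 := by
  rw [← sin_pi_div_six]
  exact arcsin_sin (by linarith [pi_pos]) (by linarith [pi_pos])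

/-- Newton's identity: `π = ∑_{q≥0} (3/((2q+1)·2^{4q})) · C(2q,q)`. -/
theorem newton_pi_series :
    HasSum (fun q : ℕ =>
      (3 / ((2 * (q : ℝ) + 1) * (2 : ℝ) ^ (4 * q))) * (Nat.choose (2 * q) q : ℝ))
      Real.pi := by
  have h := (hasSum_arcsin (r := 1 / 2) (by norm_num [abs_of_pos])).mul_left 6
  rw [arcsin_one_half, mul_div_cancel₀ _ (by norm_num)] at h
  refine h.congr_fun fun q => ?_
  have h16 : (2 : ℝ) ^ (4 * q) = 4 ^ q * 4 ^ q := by rw [← mul_pow, pow_mul]; norm_num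
  rw [h16, pow_succ, pow_mul, one_div, inv_pow, inv_pow]
  field_simp
  ring
end

section
/- For Hermite polynomials H_n (probabilists' convention) and real numbers a, b with a² + b² = 1, the identity H_n(ax + by) = ∑_{k=0}^n C(n,k) a^k b^{n-k} H_k(x) H_{n-k}(y) holds for all real x, y. -/
open Polynomial Finset

lemma derivative_hermite_succ (n : ℕ) :
    derivative (hermite (n + 1)) = (n + 1 : ℕ) • hermite n := by
  induction n with
  | zero => norm_num [hermite_one, hermite_zero]
  | succ n ih =>
    rw [hermite_succ (n + 1)]
    rw [derivative_sub, derivative_mul, derivative_X, one_mul, ih, hermite_succ n]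
    rw [derivative_smul, smul_sub]
    simp only [smul_smul, nsmul_eq_mul]
    push_cast
    ring

lemma aeval_hermite_succ (z : ℝ) (n : ℕ) :
    z * aeval z (hermite n) =
      aeval z (hermite (n + 1)) + (n : ℝ) * aeval z (hermite (n - 1)) := by
  cases n with
  | zero => norm_num [hermite_one, hermite_zero]
  | succ n =>
    have : aeval z (hermite (n + 1 + 1)) =
        z * aeval z (hermite (n + 1)) - (n + 1 : ℝ) * aeval z (hermite n) := by
      rw [hermite_succ (n + 1), derivative_hermite_succ]
      simp [map_sub, map_mul, nsmul_eq_mul]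
    simp only [Nat.add_sub_cancel, this]
    push_cast
    ring

noncomputable def hermS (a b x y : ℝ) (n : ℕ) : ℝ :=
  ∑ k ∈ Finset.range (n + 1),
    (Nat.choose n k : ℝ) * a ^ k * b ^ (n - k) *
      aeval x (hermite k) * aeval y (hermite (n - k))

section
variable (a b x y : ℝ) (n : ℕ)

local notation "Hx" k => aeval x (hermite k)
local notation "Hy" k => aeval y (hermite k)

lemma hermB :
    ∑ k ∈ range (n + 2), ((n + 1).choose k : ℝ) * (k : ℝ) * a ^ (k + 1) *
        b ^ (n + 1 - k) * (Hx (k - 1)) * (Hy (n + 1 - k)) =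
      ((n : ℝ) + 1) * a ^ 2 * hermS a b x y n := by
  rw [Finset.sum_range_succ']
  simp only [Nat.cast_zero, mul_zero, zero_mul, add_zero, Nat.sub_zero,
    Nat.succ_sub_succ, Nat.add_sub_cancel, hermS, Finset.mul_sum]
  apply Finset.sum_congr rfl
  intro k hk
  have hcast : (((n + 1).choose (k + 1) : ℕ) : ℝ) * ((k : ℝ) + 1)
      = ((n : ℝ) + 1) * (n.choose k : ℝ) := by
    exact_mod_cast congrArg (Nat.cast (R := ℝ)) (Nat.add_one_mul_choose_eq n k).symm
  push_cast
  linear_combination (a ^ (k + 2) * b ^ (n - k) * (Hx k) * (Hy (n - k))) * hcast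

lemma hermD :
    ∑ k ∈ range (n + 2), ((n + 1).choose k : ℝ) * ((n + 1 - k : ℕ) : ℝ) * a ^ k *
        b ^ (n + 2 - k) * (Hx k) * (Hy (n - k)) =
      ((n : ℝ) + 1) * b ^ 2 * hermS a b x y n := by
  rw [Finset.sum_range_succ]
  simp only [Nat.sub_self, Nat.cast_zero, mul_zero, zero_mul, add_zero,
    hermS, Finset.mul_sum]
  apply Finset.sum_congr rfl
  intro k hk
  have hk' : k ≤ n := by simpa [Nat.lt_succ_iff] using hk
  have hcast : (((n + 1).choose k : ℕ) : ℝ) * ((n + 1 - k : ℕ) : ℝ)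
      = ((n : ℝ) + 1) * (n.choose k : ℝ) := by
    have h := Nat.choose_mul_succ_eq n k
    have h2 : ((n.choose k * (n + 1) : ℕ) : ℝ)
        = (((n + 1).choose k * (n + 1 - k) : ℕ) : ℝ) := congrArg Nat.cast h
    push_cast at h2
    linarith
  rw [show n + 2 - k = (n - k) + 2 from by omega]
  linear_combination (a ^ k * b ^ (n - k) * b ^ 2 * (Hx k) * (Hy (n - k))) * hcast

lemma hermAC :
    (∑ k ∈ range (n + 2), ((n + 1).choose k : ℝ) * a ^ (k + 1) * b ^ (n + 1 - k) *
        (Hx (k + 1)) * (Hy (n + 1 - k))) +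
      (∑ k ∈ range (n + 2), ((n + 1).choose k : ℝ) * a ^ k * b ^ (n + 2 - k) *
        (Hx k) * (Hy (n + 2 - k))) = hermS a b x y (n + 2) := by
  have hS : hermS a b x y (n + 2)
      = (∑ k ∈ range (n + 2), ((n + 2).choose (k + 1) : ℝ) * a ^ (k + 1) * b ^ (n + 1 - k) *
          (Hx (k + 1)) * (Hy (n + 1 - k)))
        + b ^ (n + 2) * (Hx 0) * (Hy (n + 2)) := by
    rw [hermS, Finset.sum_range_succ']
    simp [Nat.succ_sub_succ]
  have pascal : ∀ k : ℕ, (((n + 2).choose (k + 1) : ℕ) : ℝ)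
      = ((n + 1).choose k : ℝ) + ((n + 1).choose (k + 1) : ℝ) := by
    intro k
    exact_mod_cast congrArg (Nat.cast (R := ℝ)) (Nat.choose_succ_succ (n + 1) k)
  have hsplit : (∑ k ∈ range (n + 2), ((n + 2).choose (k + 1) : ℝ) * a ^ (k + 1) *
        b ^ (n + 1 - k) * (Hx (k + 1)) * (Hy (n + 1 - k)))
      = (∑ k ∈ range (n + 2), ((n + 1).choose k : ℝ) * a ^ (k + 1) * b ^ (n + 1 - k) *
          (Hx (k + 1)) * (Hy (n + 1 - k)))
        + (∑ k ∈ range (n + 2), ((n + 1).choose (k + 1) : ℝ) * a ^ (k + 1) * b ^ (n + 1 - k) *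
          (Hx (k + 1)) * (Hy (n + 1 - k))) := by
    rw [← Finset.sum_add_distrib]
    apply Finset.sum_congr rfl
    intro k _
    rw [pascal k]; ring
  have hE : (∑ k ∈ range (n + 2), ((n + 1).choose (k + 1) : ℝ) * a ^ (k + 1) * b ^ (n + 1 - k) *
        (Hx (k + 1)) * (Hy (n + 1 - k)))
      = ∑ k ∈ range (n + 1), ((n + 1).choose (k + 1) : ℝ) * a ^ (k + 1) * b ^ (n + 1 - k) *
        (Hx (k + 1)) * (Hy (n + 1 - k)) := by
    rw [Finset.sum_range_succ]
    simp [Nat.choose_eq_zero_of_lt]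
  have hC : (∑ k ∈ range (n + 2), ((n + 1).choose k : ℝ) * a ^ k * b ^ (n + 2 - k) *
        (Hx k) * (Hy (n + 2 - k)))
      = (∑ k ∈ range (n + 1), ((n + 1).choose (k + 1) : ℝ) * a ^ (k + 1) * b ^ (n + 1 - k) *
          (Hx (k + 1)) * (Hy (n + 1 - k)))
        + b ^ (n + 2) * (Hx 0) * (Hy (n + 2)) := by
    rw [Finset.sum_range_succ']
    simp [Nat.succ_sub_succ]
  rw [hS, hsplit, hE, hC]
  ring

lemma hermStep :
    (a * x + b * y) * hermS a b x y (n + 1) =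
      hermS a b x y (n + 2) +
        ((n : ℝ) + 1) * (a ^ 2 + b ^ 2) * hermS a b x y n := by
  have expand : ∀ k ∈ range (n + 2),
      (a * x + b * y) * ((Nat.choose (n + 1) k : ℝ) * a ^ k * b ^ (n + 1 - k) *
        (Hx k) * (Hy (n + 1 - k)))
      = ((n + 1).choose k : ℝ) * a ^ (k + 1) * b ^ (n + 1 - k) *
          (Hx (k + 1)) * (Hy (n + 1 - k))
        + ((n + 1).choose k : ℝ) * (k : ℝ) * a ^ (k + 1) * b ^ (n + 1 - k) *
          (Hx (k - 1)) * (Hy (n + 1 - k))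
        + ((n + 1).choose k : ℝ) * a ^ k * b ^ (n + 2 - k) *
          (Hx k) * (Hy (n + 2 - k))
        + ((n + 1).choose k : ℝ) * ((n + 1 - k : ℕ) : ℝ) * a ^ k * b ^ (n + 2 - k) *
          (Hx k) * (Hy (n - k)) := by
    intro k hk
    have hk' : k ≤ n + 1 := by simpa [Nat.lt_succ_iff] using hk
    have hx := aeval_hermite_succ x k
    have hy := aeval_hermite_succ y (n + 1 - k)
    rw [show n + 1 - k - 1 = n - k from by omega] at hy
    rw [show n + 2 - k = (n + 1 - k) + 1 from by omega]
    linear_combination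
      (((n + 1).choose k : ℝ) * a ^ k * b ^ (n + 1 - k) * a * (Hy (n + 1 - k))) * hx
      + (((n + 1).choose k : ℝ) * a ^ k * b ^ (n + 1 - k) * b * (Hx k)) * hy
  rw [hermS, Finset.mul_sum, Finset.sum_congr rfl expand]
  simp only [Finset.sum_add_distrib]
  rw [hermB a b x y n, hermD a b x y n]
  have := hermAC a b x y n
  linear_combination this

end

lemma herm_main (a b : ℝ) (hab : a ^ 2 + b ^ 2 = 1) (n : ℕ) (x y : ℝ) :
    aeval (a * x + b * y) (hermite n) = hermS a b x y n := by
  induction n using Nat.twoStepInduction with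
  | zero => simp [hermS, hermite_zero]
  | one =>
    simp [hermS, Finset.sum_range_succ, hermite_one, hermite_zero]
    ring
  | more n ih1 ih2 =>
    have hrec := aeval_hermite_succ (a * x + b * y) (n + 1)
    simp only [Nat.add_sub_cancel] at hrec
    have h2 : aeval (a * x + b * y) (hermite (n + 2))
        = (a * x + b * y) * aeval (a * x + b * y) (hermite (n + 1))
          - ((n : ℝ) + 1) * aeval (a * x + b * y) (hermite n) := by
      push_cast at hrec
      linarith [hrec]
    rw [h2, ih1, ih2, hermStep a b x y n, hab]
    ring

/-- For probabilists' Hermite polynomials `H_n` and reals `a, b` with `a² + b² = 1`,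
`H_n(ax + by) = ∑_{k=0}^n C(n,k) a^k b^{n-k} H_k(x) H_{n-k}(y)`. -/
theorem hermite_add_decomposition (a b : ℝ) (hab : a ^ 2 + b ^ 2 = 1) (n : ℕ)
    (x y : ℝ) :
    Polynomial.aeval (a * x + b * y) (Polynomial.hermite n) =
      ∑ k ∈ Finset.range (n + 1),
        (Nat.choose n k : ℝ) * a ^ k * b ^ (n - k) *
          Polynomial.aeval x (Polynomial.hermite k) *
          Polynomial.aeval y (Polynomial.hermite (n - k)) := by
  exact herm_main a b hab n x y
end

section
/- Let H ∈ (0, 1/2), s_H as above, and q ≥ 1 an integer. Then ∑_{k∈ℤ} s_H(k)^{2q+1} > 0. -/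
/-!
For `n ≥ 0`, `s_H(n + 1) = (δ(n + 1) - δ(n)) / 4` with `δ(n) = (n + 1)^{2H} - n^{2H} ≥ 0`, and `δ` is
decreasing by concavity of `x ↦ x^{2H}`. So `s_H(k) ≤ 0` for `k ≥ 1`, and `∑_{k ≥ 1} |s_H(k)|`
telescopes to at most `δ(0) / 4 = 1 / 4`; hence `∑_{k ≥ 1} |s_H(k)|^{2q+1} ≤ (1/4)^{2q+1}`. As `s_H` is
even, the series is at least `s_H(0)^{2q+1} - 2 (1/4)^{2q+1} = (1/2)^{2q+1} - 2 (1/4)^{2q+1} > 0`.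
-/

open Finset

noncomputable def sH (H : ℝ) (k : ℤ) : ℝ :=
  (|(k : ℝ) + 1| ^ (2 * H) + |(k : ℝ) - 1| ^ (2 * H) - 2 * |(k : ℝ)| ^ (2 * H)) / 4

noncomputable def rpowIncr (p : ℝ) (n : ℕ) : ℝ := ((n : ℝ) + 1) ^ p - (n : ℝ) ^ p

lemma hasSum_int_of_even {M : Type*} [AddCommMonoid M] [TopologicalSpace M] [ContinuousAdd M]
    {f : ℤ → M} (hf : ∀ k, f (-k) = f k) {a : M} (ha : HasSum (fun n : ℕ ↦ f (n + 1)) a) :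
    HasSum f (a + f 0 + a) :=
  ha.of_add_one_of_neg_add_one (by simpa only [hf] using ha)

lemma tsum_pow_succ_le {ι : Type*} {u : ι → ℝ} (hu : ∀ i, 0 ≤ u i) (hs : Summable u) (m : ℕ) :
    Summable (fun i ↦ u i ^ (m + 1)) ∧ ∑' i, u i ^ (m + 1) ≤ (∑' i, u i) ^ (m + 1) := by
  have hle : ∀ i, u i ^ (m + 1) ≤ (∑' i, u i) ^ m * u i := fun i ↦ by
    rw [pow_succ]
    exact mul_le_mul_of_nonneg_right (pow_le_pow_left₀ (hu i) (hs.le_tsum i fun j _ ↦ hu j) m) (hu i)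
  have hs' := (hs.mul_left ((∑' i, u i) ^ m)).of_nonneg_of_le (fun i ↦ pow_nonneg (hu i) _) hle
  refine ⟨hs', ?_⟩
  calc ∑' i, u i ^ (m + 1) ≤ ∑' i, (∑' i, u i) ^ m * u i := hs'.tsum_le_tsum hle (hs.mul_left _)
    _ = (∑' i, u i) ^ (m + 1) := by rw [tsum_mul_left, pow_succ]

lemma rpow_add_one_add_rpow_sub_one_le {p x : ℝ} (hp0 : 0 ≤ p) (hp1 : p ≤ 1) (hx : 1 ≤ x) :
    (x + 1) ^ p + (x - 1) ^ p ≤ 2 * x ^ p := by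
  have h := (Real.concaveOn_rpow hp0 hp1).2 (Set.mem_Ici.2 (by linarith : (0 : ℝ) ≤ x + 1))
    (Set.mem_Ici.2 (by linarith : (0 : ℝ) ≤ x - 1)) (by norm_num : (0 : ℝ) ≤ 1 / 2)
    (by norm_num : (0 : ℝ) ≤ 1 / 2) (by norm_num)
  rw [smul_eq_mul, smul_eq_mul, smul_eq_mul, smul_eq_mul,
    show (1 / 2 : ℝ) * (x + 1) + 1 / 2 * (x - 1) = x by ring] at h
  linarith

lemma rpowIncr_nonneg {p : ℝ} (hp : 0 ≤ p) (n : ℕ) : 0 ≤ rpowIncr p n :=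
  sub_nonneg.2 (Real.rpow_le_rpow n.cast_nonneg (by linarith) hp)

lemma rpowIncr_zero {p : ℝ} (hp : p ≠ 0) : rpowIncr p 0 = 1 := by
  simp [rpowIncr, Real.zero_rpow hp]

lemma rpowIncr_succ_le {p : ℝ} (hp0 : 0 ≤ p) (hp1 : p ≤ 1) (n : ℕ) :
    rpowIncr p (n + 1) ≤ rpowIncr p n := by
  have h := rpow_add_one_add_rpow_sub_one_le hp0 hp1 (le_add_of_nonneg_left n.cast_nonneg)
  simp only [rpowIncr, Nat.cast_add_one, add_sub_cancel_right] at h ⊢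
  linarith

lemma sH_neg (H : ℝ) (k : ℤ) : sH H (-k) = sH H k := by
  have hplus : -(k : ℝ) + 1 = -((k : ℝ) - 1) := by ring
  have hminus : -(k : ℝ) - 1 = -((k : ℝ) + 1) := by ring
  simp only [sH, Int.cast_neg, hplus, hminus, abs_neg]
  ring

lemma sH_zero {H : ℝ} (hH : H ≠ 0) : sH H 0 = 1 / 2 := by
  norm_num [sH, Real.zero_rpow (mul_ne_zero two_ne_zero hH)]

lemma sH_natCast_add_one (H : ℝ) (n : ℕ) :
    sH H (n + 1) = (rpowIncr (2 * H) (n + 1) - rpowIncr (2 * H) n) / 4 := by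
  have hn : (0 : ℝ) ≤ n := n.cast_nonneg
  simp only [sH, rpowIncr, Int.cast_add, Int.cast_natCast, Int.cast_one, Nat.cast_add_one,
    add_sub_cancel_right, abs_of_nonneg hn, abs_of_nonneg (by linarith : (0 : ℝ) ≤ n + 1),
    abs_of_nonneg (by linarith : (0 : ℝ) ≤ n + 1 + 1)]
  ring

lemma sH_natCast_add_one_nonpos {H : ℝ} (h0 : 0 ≤ H) (h1 : H ≤ 1 / 2) (n : ℕ) :
    sH H (n + 1) ≤ 0 := by
  rw [sH_natCast_add_one]
  linarith [rpowIncr_succ_le (by linarith : 0 ≤ 2 * H) (by linarith) n]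

lemma sum_range_neg_sH_add_one_le {H : ℝ} (h0 : 0 < H) (N : ℕ) :
    ∑ n ∈ range N, -sH H (n + 1) ≤ 1 / 4 := by
  have htel : ∑ n ∈ range N, -sH H (n + 1) = (rpowIncr (2 * H) 0 - rpowIncr (2 * H) N) / 4 := by
    simp only [sH_natCast_add_one, ← Finset.sum_range_sub' (rpowIncr (2 * H)), Finset.sum_div]
    exact Finset.sum_congr rfl fun n _ ↦ by ring
  rw [htel, rpowIncr_zero (by positivity)]
  linarith [rpowIncr_nonneg (by positivity : 0 ≤ 2 * H) N]

lemma summable_neg_sH_add_one {H : ℝ} (h0 : 0 < H) (h1 : H ≤ 1 / 2) :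
    Summable fun n : ℕ ↦ -sH H (n + 1) :=
  summable_of_sum_range_le (fun n ↦ neg_nonneg.2 (sH_natCast_add_one_nonpos h0.le h1 n))
    (sum_range_neg_sH_add_one_le h0)

lemma tsum_neg_sH_add_one_le {H : ℝ} (h0 : 0 < H) (h1 : H ≤ 1 / 2) :
    ∑' n : ℕ, -sH H (n + 1) ≤ 1 / 4 :=
  Real.tsum_le_of_sum_range_le (fun n ↦ neg_nonneg.2 (sH_natCast_add_one_nonpos h0.le h1 n))
    (sum_range_neg_sH_add_one_le h0)

lemma two_mul_quarter_pow_lt_half_pow {m : ℕ} (hm : m ≠ 0) :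
    2 * (1 / 4 : ℝ) ^ (m + 1) < (1 / 2) ^ (m + 1) := by
  have hlt : (1 / 2 : ℝ) ^ m < 1 := pow_lt_one₀ (by norm_num) (by norm_num) hm
  rw [show (1 / 4 : ℝ) = 1 / 2 * (1 / 2) by norm_num, mul_pow, pow_succ (1 / 2 : ℝ) m]
  nlinarith [pow_pos (by norm_num : (0 : ℝ) < 1 / 2) m]

/-- For `H ∈ (0,1/2)`, `s_H(k) = (1/4)(|k+1|^{2H} + |k-1|^{2H} - 2|k|^{2H})` and
any integer `q ≥ 1`, the series `∑_{k∈ℤ} s_H(k)^{2q+1}` is (convergent and) positive. -/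
theorem sH_odd_power_sum_pos (H : ℝ) (h0 : 0 < H) (h1 : H < 1 / 2) (q : ℕ) (hq : 1 ≤ q) :
    0 < ∑' k : ℤ,
      ((|(k : ℝ) + 1| ^ (2 * H) + |(k : ℝ) - 1| ^ (2 * H)
          - 2 * |(k : ℝ)| ^ (2 * H)) / 4) ^ (2 * q + 1) := by
  change 0 < ∑' k : ℤ, sH H k ^ (2 * q + 1)
  set u : ℕ → ℝ := fun n ↦ -sH H (n + 1)
  have hu : ∀ n, 0 ≤ u n := fun n ↦ neg_nonneg.2 (sH_natCast_add_one_nonpos h0.le h1.le n)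
  obtain ⟨hpow_sum, hpow_tsum⟩ := tsum_pow_succ_le hu (summable_neg_sH_add_one h0 h1.le) (2 * q)
  set S := ∑' n, u n ^ (2 * q + 1)
  have hsum : HasSum (fun k : ℤ ↦ sH H k ^ (2 * q + 1)) (-S + sH H 0 ^ (2 * q + 1) + -S) :=
    hasSum_int_of_even (fun k ↦ by rw [sH_neg]) <| hpow_sum.hasSum.neg.congr_fun fun n ↦ by
      simp only [u, (odd_two_mul_add_one q).neg_pow, neg_neg]
  have hS : S ≤ (1 / 4) ^ (2 * q + 1) :=
    hpow_tsum.trans (pow_le_pow_left₀ (tsum_nonneg hu) (tsum_neg_sH_add_one_le h0 h1.le) _)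
  rw [hsum.tsum_eq, sH_zero h0.ne']
  linarith [two_mul_quarter_pow_lt_half_pow (by omega : 2 * q ≠ 0)]
end

section
/- Let x₁, x₂, x₃ be i.i.d. uniform on {-1,1} and y₁, y₂, y₃ i.i.d. uniform on {-1,1} with P[xᵢ = yᵢ] = 1/3 (arising from a uniformly random ranking of three alternatives). Set w = x₁+x₂+x₃ and z = y₁+y₂+y₃. Then Cov[sgn(w), sgn(z)] = -7/27. -/
/-!
For `±1`-valued variables, `sgn (a₀ + a₁ + a₂)` is the majority function, whose Fourier expansion
is `(a₀ + a₁ + a₂ - a₀a₁a₂) / 2`. Independence of the pairs `(xᵢ, yᵢ)` makes the monomials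
`∏ i ∈ S, xᵢ` and `∏ i ∈ T, yᵢ` orthogonal unless `S = T`, and then their product has mean `ρ ^ #S`
with `ρ = E[xᵢ yᵢ] = 2 P[xᵢ = yᵢ] - 1 = -1/3`. Hence `E[sgn w] = 0` and
`E[sgn w · sgn z] = ∑ S, f̂(S)² ρ ^ #S = 3/4 ρ + 1/4 ρ³ = -7/27`.
-/

open MeasureTheory ProbabilityTheory Finset

section Fourier

variable {ι Ω : Type*} [Fintype ι] [MeasurableSpace Ω] {μ : Measure Ω} {x y : ι → Ω → ℝ}

theorem integrable_prod_mul_prod [IsFiniteMeasure μ]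
    (hx : ∀ i, Measurable (x i)) (hy : ∀ i, Measurable (y i))
    (hbx : ∀ i, ∀ᵐ ω ∂μ, |x i ω| ≤ 1) (hby : ∀ i, ∀ᵐ ω ∂μ, |y i ω| ≤ 1) (S T : Finset ι) :
    Integrable (fun ω => (∏ i ∈ S, x i ω) * ∏ i ∈ T, y i ω) μ := by
  refine .of_bound (by fun_prop) 1 ?_
  filter_upwards [ae_all_iff.2 hbx, ae_all_iff.2 hby] with ω hxω hyω
  rw [norm_mul, norm_prod, norm_prod]
  exact mul_le_one₀ (prod_le_one (fun _ _ => norm_nonneg _) fun i _ => hxω i)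
    (prod_nonneg fun _ _ => norm_nonneg _) (prod_le_one (fun _ _ => norm_nonneg _) fun i _ => hyω i)

variable [DecidableEq ι]

theorem integral_prod_mul_prod_of_iIndepFun
    (hx : ∀ i, Measurable (x i)) (hy : ∀ i, Measurable (y i))
    (hind : iIndepFun (fun i ω => (x i ω, y i ω)) μ)
    (hx0 : ∀ i, ∫ ω, x i ω ∂μ = 0) (hy0 : ∀ i, ∫ ω, y i ω ∂μ = 0) {ρ : ℝ}
    (hxy : ∀ i, ∫ ω, x i ω * y i ω ∂μ = ρ) (S T : Finset ι) :
    ∫ ω, (∏ i ∈ S, x i ω) * ∏ i ∈ T, y i ω ∂μ = if S = T then ρ ^ #S else 0 := by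
  have := hind.isProbabilityMeasure
  let φ : ι → ℝ × ℝ → ℝ := fun i p => (if i ∈ S then p.1 else 1) * (if i ∈ T then p.2 else 1)
  have hφ : ∀ i, Measurable (φ i) := fun i => by
    simp only [φ]; split_ifs <;> fun_prop
  have hprod : ∀ ω, (∏ i ∈ S, x i ω) * ∏ i ∈ T, y i ω = ∏ i, φ i (x i ω, y i ω) := by
    intro ω
    rw [prod_mul_distrib, prod_ite_mem, prod_ite_mem, univ_inter, univ_inter]
  have hfactor : ∀ i, ∫ ω, φ i (x i ω, y i ω) ∂μ =
      if i ∈ S then (if i ∈ T then ρ else 0) else (if i ∈ T then 0 else 1) := by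
    intro i; by_cases hS : i ∈ S <;> by_cases hT : i ∈ T <;> simp [φ, hS, hT, hx0, hy0, hxy]
  simp_rw [hprod]
  rw [hind.integral_fun_prod_comp (fun i => ((hx i).prodMk (hy i)).aemeasurable)
    (fun i => (hφ i).aestronglyMeasurable)]
  simp_rw [hfactor]
  split_ifs with hST
  · subst hST
    trans ∏ i, if i ∈ S then ρ else 1
    · exact prod_congr rfl fun i _ => by by_cases h : i ∈ S <;> simp [h]
    · rw [prod_ite_mem, univ_inter, prod_const]
  · obtain ⟨i, hi⟩ : ∃ i, ¬(i ∈ S ↔ i ∈ T) := by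
      simpa [Finset.ext_iff] using hST
    exact prod_eq_zero (mem_univ i) (by by_cases hS : i ∈ S <;> simp_all)

theorem integral_fourier_mul_fourier
    (hx : ∀ i, Measurable (x i)) (hy : ∀ i, Measurable (y i))
    (hbx : ∀ i, ∀ᵐ ω ∂μ, |x i ω| ≤ 1) (hby : ∀ i, ∀ᵐ ω ∂μ, |y i ω| ≤ 1)
    (hind : iIndepFun (fun i ω => (x i ω, y i ω)) μ)
    (hx0 : ∀ i, ∫ ω, x i ω ∂μ = 0) (hy0 : ∀ i, ∫ ω, y i ω ∂μ = 0) {ρ : ℝ}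
    (hxy : ∀ i, ∫ ω, x i ω * y i ω ∂μ = ρ) (f g : Finset ι → ℝ) :
    ∫ ω, (∑ S, f S * ∏ i ∈ S, x i ω) * (∑ T, g T * ∏ i ∈ T, y i ω) ∂μ
      = ∑ S, f S * g S * ρ ^ #S := by
  have := hind.isProbabilityMeasure
  have hint := integrable_prod_mul_prod (μ := μ) hx hy hbx hby
  simp_rw [sum_mul_sum, mul_mul_mul_comm (f _)]
  rw [integral_finsetSum _ fun S _ => integrable_finsetSum _ fun T _ => (hint S T).const_mul _]
  simp_rw [integral_finsetSum _ fun T _ => (hint _ T).const_mul _, integral_const_mul,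
    integral_prod_mul_prod_of_iIndepFun hx hy hind hx0 hy0 hxy, mul_ite, mul_zero, sum_ite_eq,
    if_pos (mem_univ _)]

end Fourier

section PlusMinusOne

variable {Ω : Type*} [MeasurableSpace Ω] {μ : Measure Ω} {X Y : Ω → ℝ}

theorem ae_eq_one_or_eq_neg_one_of_map_eq (hX : Measurable X)
    (h : μ.map X = (1 / 2 : ENNReal) • Measure.dirac 1 + (1 / 2 : ENNReal) • Measure.dirac (-1)) :
    ∀ᵐ ω ∂μ, X ω = 1 ∨ X ω = -1 := by
  have hs : MeasurableSet {t : ℝ | t = 1 ∨ t = -1} :=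
    (measurableSet_singleton 1).union (measurableSet_singleton (-1))
  rw [← ae_map_iff hX.aemeasurable hs, h]
  simp [ae_add_measure_iff]

theorem integral_eq_zero_of_map_eq (hX : Measurable X)
    (h : μ.map X = (1 / 2 : ENNReal) • Measure.dirac 1 + (1 / 2 : ENNReal) • Measure.dirac (-1)) :
    ∫ ω, X ω ∂μ = 0 := by
  calc ∫ ω, X ω ∂μ = ∫ t, t ∂(μ.map X) :=
        (integral_map hX.aemeasurable aestronglyMeasurable_id).symm
    _ = 0 := by
      have hint (a : ℝ) : Integrable (fun t : ℝ => t) ((1 / 2 : ENNReal) • Measure.dirac a) :=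
        (integrable_dirac (by simp)).smul_measure (by simp)
      rw [h, integral_add_measure (hint 1) (hint (-1))]
      simp

theorem integral_mul_eq_of_ae_eq_one_or_eq_neg_one [IsProbabilityMeasure μ]
    (hX : Measurable X) (hY : Measurable Y)
    (hXpm : ∀ᵐ ω ∂μ, X ω = 1 ∨ X ω = -1) (hYpm : ∀ᵐ ω ∂μ, Y ω = 1 ∨ Y ω = -1) :
    ∫ ω, X ω * Y ω ∂μ = 2 * μ.real {ω | X ω = Y ω} - 1 := by
  have hA : MeasurableSet {ω | X ω = Y ω} := measurableSet_eq_fun hX hY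
  have hae : (fun ω => X ω * Y ω) =ᵐ[μ] fun ω => 2 * {ω | X ω = Y ω}.indicator 1 ω - 1 := by
    filter_upwards [hXpm, hYpm] with ω hXω hYω
    rcases hXω with h1 | h1 <;> rcases hYω with h2 | h2 <;>
      norm_num [Set.indicator_apply, h1, h2]
  rw [integral_congr_ae hae, integral_sub ((integrable_indicator_iff hA).2
    (integrable_const 1).integrableOn |>.const_mul 2) (integrable_const 1), integral_const_mul,
    integral_indicator_one hA]
  simp

end PlusMinusOne

/-- `majorityCoeff #S` is the Fourier coefficient at `S` of the majority of three bits. -/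
noncomputable def majorityCoeff : ℕ → ℝ
  | 1 => 1 / 2
  | 3 => -1 / 2
  | _ => 0

theorem sign_add_add_eq_sum_majorityCoeff {a : Fin 3 → ℝ} (ha : ∀ i, a i = 1 ∨ a i = -1) :
    Real.sign (a 0 + a 1 + a 2) = ∑ S, majorityCoeff #S * ∏ i ∈ S, a i := by
  have hexp : ∑ S : Finset (Fin 3), majorityCoeff #S * ∏ i ∈ S, a i
      = (a 0 + a 1 + a 2 - a 0 * a 1 * a 2) / 2 := by
    rw [← powerset_univ, show (univ : Finset (Fin 3)) = insert 0 (insert 1 (insert 2 ∅)) by decide,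
      sum_powerset_insert (by decide)]
    simp (disch := decide) only [sum_powerset_insert, powerset_empty, sum_singleton]
    simp [majorityCoeff]
    ring
  rw [hexp]
  rcases ha 0 with h0 | h0 <;> rcases ha 1 with h1 | h1 <;> rcases ha 2 with h2 | h2 <;>
    norm_num [h0, h1, h2, Real.sign]

theorem sum_majorityCoeff_mul_self_mul_pow (ρ : ℝ) :
    ∑ S : Finset (Fin 3), majorityCoeff #S * majorityCoeff #S * ρ ^ #S
      = 3 / 4 * ρ + 1 / 4 * ρ ^ 3 := by
  rw [← powerset_univ, sum_powerset_apply_card (fun k => majorityCoeff k * majorityCoeff k * ρ ^ k)]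
  simp [sum_range_succ, majorityCoeff]
  ring

/-- Let `(xᵢ, yᵢ)`, `i = 1,2,3`, be i.i.d. pairs of `±1`-valued random variables with
uniform marginals and `P[xᵢ = yᵢ] = 1/3`. With `w = x₁+x₂+x₃`, `z = y₁+y₂+y₃`,
`Cov[sgn(w), sgn(z)] = -7/27`. -/
theorem cov_sign_triple_sums
    {Ω : Type*} [MeasureSpace Ω] [IsProbabilityMeasure (ℙ : Measure Ω)]
    (x y : Fin 3 → Ω → ℝ)
    (hx : ∀ i, Measurable (x i)) (hy : ∀ i, Measurable (y i))
    (hind : iIndepFun (fun i ω => (x i ω, y i ω)) ℙ)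
    (hxu : ∀ i, Measure.map (x i) ℙ =
      (1 / 2 : ENNReal) • Measure.dirac (1 : ℝ) +
        (1 / 2 : ENNReal) • Measure.dirac (-1 : ℝ))
    (hyu : ∀ i, Measure.map (y i) ℙ =
      (1 / 2 : ENNReal) • Measure.dirac (1 : ℝ) +
        (1 / 2 : ENNReal) • Measure.dirac (-1 : ℝ))
    (hagree : ∀ i, ℙ {ω | x i ω = y i ω} = 1 / 3) :
    (∫ ω, Real.sign (x 0 ω + x 1 ω + x 2 ω) * Real.sign (y 0 ω + y 1 ω + y 2 ω))
      - (∫ ω, Real.sign (x 0 ω + x 1 ω + x 2 ω)) *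
        (∫ ω, Real.sign (y 0 ω + y 1 ω + y 2 ω)) = -7 / 27 := by
  have hxpm i := ae_eq_one_or_eq_neg_one_of_map_eq (hx i) (hxu i)
  have hypm i := ae_eq_one_or_eq_neg_one_of_map_eq (hy i) (hyu i)
  have hbound (v : Fin 3 → Ω → ℝ) (hv : ∀ i, ∀ᵐ ω, v i ω = 1 ∨ v i ω = -1) i :
      ∀ᵐ ω, |v i ω| ≤ 1 :=
    (hv i).mono fun ω h => by rcases h with h | h <;> simp [h]
  have hmaj (v : Fin 3 → Ω → ℝ) (hv : ∀ i, ∀ᵐ ω, v i ω = 1 ∨ v i ω = -1) :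
      (fun ω => Real.sign (v 0 ω + v 1 ω + v 2 ω)) =ᵐ[ℙ]
        fun ω => ∑ S, majorityCoeff #S * ∏ i ∈ S, v i ω := by
    filter_upwards [ae_all_iff.2 hv] with ω hω using sign_add_add_eq_sum_majorityCoeff hω
  have hcorr i : ∫ ω, x i ω * y i ω = -1 / 3 := by
    rw [integral_mul_eq_of_ae_eq_one_or_eq_neg_one (hx i) (hy i) (hxpm i) (hypm i),
      measureReal_def, hagree i]
    norm_num
  have hfourier := integral_fourier_mul_fourier hx hy (hbound x hxpm) (hbound y hypm) hind
    (fun i => integral_eq_zero_of_map_eq (hx i) (hxu i))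
    (fun i => integral_eq_zero_of_map_eq (hy i) (hyu i)) hcorr
  have hmaj_xy : (fun ω => Real.sign (x 0 ω + x 1 ω + x 2 ω) * Real.sign (y 0 ω + y 1 ω + y 2 ω))
      =ᵐ[ℙ] fun ω => (∑ S, majorityCoeff #S * ∏ i ∈ S, x i ω) *
        ∑ T, majorityCoeff #T * ∏ i ∈ T, y i ω := (hmaj x hxpm).mul (hmaj y hypm)
  -- taking the coefficients of the constant function `1` on the other side
  have hmean_x : ∫ ω, ∑ S, majorityCoeff #S * ∏ i ∈ S, x i ω = 0 := by
    simpa [ite_mul, majorityCoeff] using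
      hfourier (fun S => majorityCoeff #S) fun T => if T = ∅ then 1 else 0
  have hmean_y : ∫ ω, ∑ T, majorityCoeff #T * ∏ i ∈ T, y i ω = 0 := by
    simpa [ite_mul, majorityCoeff] using
      hfourier (fun S => if S = ∅ then 1 else 0) fun T => majorityCoeff #T
  rw [integral_congr_ae hmaj_xy, integral_congr_ae (hmaj x hxpm), integral_congr_ae (hmaj y hypm),
    hfourier, hmean_x, hmean_y, sum_majorityCoeff_mul_self_mul_pow]
  norm_num
end

section
/- Let Z be standard Gaussian and Φ its CDF. Then for every real x, Φ(x) = E[𝟙(Z/√2 + x/√2 > 0)], i.e., P[Z > -x] = Φ(x), and consequently the Hermite coefficients of Φ satisfy ℓ_{2q+1} = d_{2q+1}·2^{-q-1/2}, where 𝟙[·>0] = 1/2 + ∑_q d_{2q+1}H_{2q+1} and Φ = 1/2 + ∑_q ℓ_{2q+1}H_{2q+1} in L²(ℝ, γ). -/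
/-!
Gaussian integration by parts, `E[H_{n+1}(Z) g(Z)] = E[H_n(Z) g'(Z)]`, comes from
`(-H_n φ)' = H_{n+1} φ`. With `g = Φ` it turns the coefficient of `H_{2q+1}` into
`E[H_{2q}(Z) φ(Z)] / (2q+1)!`. With `g = φ`, together with `t H_{n+1} = H_{n+2} + (n+1) H_n`,
it gives `E[H_{n+2}(Z) φ(Z)] = -(n+1)/2 · E[H_n(Z) φ(Z)]`, starting from
`E[φ(Z)] = ∫ φ² = 1/(2√π)`. The formula `Φ(x) = P[Z > -x]` is the symmetry of `Z`.
-/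

open MeasureTheory ProbabilityTheory Polynomial Real Set
open scoped NNReal

theorem integrable_aeval_of_forall_memLp {R : Type*} [CommSemiring R] [Algebra R ℝ]
    {μ : Measure ℝ} [IsFiniteMeasure μ] (hμ : ∀ n : ℕ, MemLp id n μ) (p : R[X]) :
    Integrable (fun t => aeval t p) μ := by
  induction p using Polynomial.induction_on' with
  | add p q hp hq => simpa only [map_add] using hp.fun_add hq
  | monomial n a =>
    simp only [aeval_monomial]
    refine Integrable.const_mul ?_ _
    exact (hμ n).integrable_norm_pow'.mono' (by fun_prop) (ae_of_all _ fun t => by simp)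

namespace Polynomial

theorem derivative_hermite_succ (n : ℕ) :
    derivative (hermite (n + 1)) = (n + 1 : ℤ[X]) * hermite n := by
  induction n with
  | zero => simp
  | succ n ih =>
    rw [hermite_succ (n + 1), derivative_sub, derivative_mul, derivative_X, ih, derivative_mul,
      derivative_add, derivative_natCast, derivative_one, hermite_succ n]
    push_cast
    ring

theorem X_mul_hermite_succ (n : ℕ) :
    X * hermite (n + 1) = hermite (n + 2) + (n + 1 : ℤ[X]) * hermite n := by
  rw [hermite_succ (n + 1), derivative_hermite_succ]
  ring

end Polynomial

theorem abs_cdf_le_one (μ : Measure ℝ) (x : ℝ) : |cdf μ x| ≤ 1 :=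
  abs_le.2 ⟨by linarith [cdf_nonneg μ x], cdf_le_one μ x⟩

theorem continuous_gaussianPDFReal (μ : ℝ) (v : ℝ≥0) : Continuous (gaussianPDFReal μ v) := by
  unfold gaussianPDFReal
  fun_prop

theorem integrable_gaussianReal_iff {E : Type*} [NormedAddCommGroup E] [NormedSpace ℝ E]
    {μ : ℝ} {v : ℝ≥0} (hv : v ≠ 0) {f : ℝ → E} :
    Integrable f (gaussianReal μ v) ↔ Integrable (fun t => gaussianPDFReal μ v t • f t) := by
  rw [gaussianReal_of_var_ne_zero _ hv, integrable_withDensity_iff_integrable_smul'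
    (measurable_gaussianPDF _ _) (ae_of_all _ fun _ => gaussianPDF_lt_top)]
  simp [toReal_gaussianPDF]

theorem integrable_aeval_gaussianReal {R : Type*} [CommSemiring R] [Algebra R ℝ]
    (μ : ℝ) (v : ℝ≥0) (p : R[X]) : Integrable (fun t => aeval t p) (gaussianReal μ v) :=
  integrable_aeval_of_forall_memLp (fun n => memLp_id_gaussianReal n) p

theorem hasDerivAt_cdf_gaussianReal (μ : ℝ) {v : ℝ≥0} (hv : v ≠ 0) (x : ℝ) :
    HasDerivAt (cdf (gaussianReal μ v)) (gaussianPDFReal μ v x) x := by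
  have hcdf : cdf (gaussianReal μ v) = fun y =>
      (∫ t in Iic 0, gaussianPDFReal μ v t) + ∫ t in 0..y, gaussianPDFReal μ v t := by
    ext y
    rw [cdf_eq_real, measureReal_def, gaussianReal_apply_eq_integral _ hv,
      ENNReal.toReal_ofReal (integral_nonneg (gaussianPDFReal_nonneg μ v)),
      ← intervalIntegral.integral_Iic_sub_Iic (integrable_gaussianPDFReal μ v).integrableOn
        (integrable_gaussianPDFReal μ v).integrableOn, add_sub_cancel]
  rw [hcdf]
  exact ((continuous_gaussianPDFReal μ v).integral_hasStrictDerivAt 0 x).hasDerivAt.const_add _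

theorem cdf_gaussianReal_eq_measureReal_Ioi_neg {v : ℝ≥0} (hv : v ≠ 0) (x : ℝ) :
    cdf (gaussianReal 0 v) x = (gaussianReal 0 v).real (Ioi (-x)) := by
  have := nullSingletonClass_gaussianReal (μ := 0) hv
  have hsymm : (gaussianReal 0 v).map (fun t => -t) = gaussianReal 0 v := by
    simpa using gaussianReal_map_neg (μ := 0) (v := v)
  rw [cdf_eq_real, ← measureReal_congr Iio_ae_eq_Iic]
  conv_lhs => rw [← hsymm, map_measureReal_apply measurable_neg measurableSet_Iio]
  simp

section StandardGaussian

local notation "γ" => gaussianReal 0 1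
local notation "φ" => gaussianPDFReal 0 1

theorem gaussianPDFReal_zero_one (t : ℝ) : φ t = (√(2 * π))⁻¹ * exp (-t ^ 2 / 2) := by
  simp [gaussianPDFReal_def]

theorem abs_gaussianPDFReal_zero_one_le (t : ℝ) : |φ t| ≤ (√(2 * π))⁻¹ := by
  rw [abs_of_nonneg (gaussianPDFReal_nonneg 0 1 t), gaussianPDFReal_zero_one]
  exact mul_le_of_le_one_right (by positivity) (exp_le_one_iff.2 (by nlinarith [sq_nonneg t]))

theorem hasDerivAt_gaussianPDFReal_zero_one (t : ℝ) : HasDerivAt φ (-t * φ t) t := by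
  have hexp : HasDerivAt (fun t => -t ^ 2 / 2) (-t) t :=
    ((hasDerivAt_pow 2 t).neg.div_const 2).congr_deriv (by ring)
  rw [funext gaussianPDFReal_zero_one]
  exact (hexp.exp.const_mul _).congr_deriv (by ring)

theorem hasDerivAt_neg_aeval_hermite_mul_gaussianPDFReal (n : ℕ) (t : ℝ) :
    HasDerivAt (fun t => -aeval t (hermite n) * φ t) (aeval t (hermite (n + 1)) * φ t) t := by
  refine (((hermite n).hasDerivAt_aeval t).neg.mul
    (hasDerivAt_gaussianPDFReal_zero_one t)).congr_deriv ?_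
  rw [hermite_succ, map_sub, map_mul, aeval_X, Pi.neg_apply]
  ring

theorem integrable_aeval_mul_gaussianPDFReal (p : ℤ[X]) :
    Integrable (fun t => aeval t p * φ t) γ :=
  (integrable_aeval_gaussianReal 0 1 p).mul_bdd (by fun_prop)
    (ae_of_all _ abs_gaussianPDFReal_zero_one_le)

theorem integral_aeval_hermite_succ_mul_gaussianReal {g g' : ℝ → ℝ} {C : ℝ} (n : ℕ)
    (hg : ∀ t, HasDerivAt g (g' t) t) (hgC : ∀ t, |g t| ≤ C)
    (hg' : Integrable (fun t => aeval t (hermite n) * g' t) γ) :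
    ∫ t, aeval t (hermite (n + 1)) * g t ∂γ = ∫ t, aeval t (hermite n) * g' t ∂γ := by
  have hgm : AEStronglyMeasurable g γ :=
    (continuous_iff_continuousAt.2 fun t => (hg t).continuousAt).aestronglyMeasurable
  have hpoly_g (p : ℤ[X]) : Integrable (fun t => φ t * (aeval t p * g t)) :=
    (integrable_gaussianReal_iff one_ne_zero).1
      ((integrable_aeval_gaussianReal 0 1 p).mul_bdd hgm (ae_of_all _ hgC))
  have hibp := integral_mul_deriv_eq_deriv_mul_of_integrable (u := g)
    (v := fun t => -aeval t (hermite n) * φ t) (fun t _ => hg t)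
    (fun t _ => hasDerivAt_neg_aeval_hermite_mul_gaussianPDFReal n t)
    ((hpoly_g _).congr (ae_of_all _ fun t => by simp only [Pi.mul_apply]; ring))
    (((integrable_gaussianReal_iff one_ne_zero).1 hg').neg.congr
      (ae_of_all _ fun t => by simp only [Pi.mul_apply, Pi.neg_apply, smul_eq_mul]; ring))
    ((hpoly_g _).neg.congr (ae_of_all _ fun t => by simp only [Pi.mul_apply, Pi.neg_apply]; ring))
  simp only [integral_gaussianReal_eq_integral_smul one_ne_zero, smul_eq_mul]
  calc ∫ t, φ t * (aeval t (hermite (n + 1)) * g t)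
      = ∫ t, g t * (aeval t (hermite (n + 1)) * φ t) := by congr 1; ext t; ring
    _ = ∫ t, φ t * (aeval t (hermite n) * g' t) := by
      rw [hibp, ← integral_neg]; congr 1; ext t; ring

theorem integral_gaussianPDFReal_gaussianReal : ∫ t, φ t ∂γ = (2 * √π)⁻¹ := by
  have hsq (t : ℝ) : φ t • φ t = (2 * π)⁻¹ * exp (-1 * t ^ 2) := by
    rw [smul_eq_mul, gaussianPDFReal_zero_one, mul_mul_mul_comm, ← mul_inv,
      mul_self_sqrt (by positivity), ← exp_add]
    ring_nf
  simp only [integral_gaussianReal_eq_integral_smul one_ne_zero, hsq]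
  rw [integral_const_mul, integral_gaussian, div_one]
  have hπ : π = √π * √π := (mul_self_sqrt pi_pos.le).symm
  have : √π ≠ 0 := by positivity
  nth_rewrite 1 [hπ]
  field_simp

theorem integral_hermite_add_two_mul_gaussianPDFReal (n : ℕ) :
    ∫ t, aeval t (hermite (n + 2)) * φ t ∂γ =
      -((n + 1) / 2) * ∫ t, aeval t (hermite n) * φ t ∂γ := by
  have hibp := integral_aeval_hermite_succ_mul_gaussianReal (n + 1)
    hasDerivAt_gaussianPDFReal_zero_one abs_gaussianPDFReal_zero_one_le
    ((integrable_aeval_mul_gaussianPDFReal (-(X * hermite (n + 1)))).congr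
      (ae_of_all _ fun t => by simp only [map_neg, map_mul, aeval_X]; ring))
  have hX : ∫ t, aeval t (hermite (n + 1)) * (-t * φ t) ∂γ =
      -(∫ t, aeval t (hermite (n + 2)) * φ t ∂γ +
        (n + 1) * ∫ t, aeval t (hermite n) * φ t ∂γ) := by
    rw [← integral_const_mul, ← integral_add (integrable_aeval_mul_gaussianPDFReal _)
      ((integrable_aeval_mul_gaussianPDFReal _).const_mul _), ← integral_neg]
    congr 1
    ext t
    have hrec := congrArg (aeval t) (X_mul_hermite_succ n)
    simp only [map_mul, map_add, aeval_X, map_natCast, map_one] at hrec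
    linear_combination (-φ t) * hrec
  linarith

theorem integral_hermite_two_mul_mul_gaussianPDFReal (q : ℕ) :
    ∫ t, aeval t (hermite (2 * q)) * φ t ∂γ =
      (-1) ^ q * (2 * q).factorial / (4 ^ q * q.factorial) * (2 * √π)⁻¹ := by
  induction q with
  | zero => simpa using integral_gaussianPDFReal_gaussianReal
  | succ q ih =>
    rw [show 2 * (q + 1) = 2 * q + 2 by ring, integral_hermite_add_two_mul_gaussianPDFReal, ih,
      Nat.factorial_succ (2 * q + 1), Nat.factorial_succ (2 * q), Nat.factorial_succ q]
    push_cast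
    field_simp
    ring

/-- For `Z` standard Gaussian with CDF `Φ`: `Φ(x) = E[𝟙(Z/√2 + x/√2 > 0)] = P[Z > -x]`
for every `x`, and consequently the Hermite coefficients of `Φ` satisfy
`ℓ_{2q+1} = d_{2q+1}·2^{-q-1/2}` with `d_{2q+1} = (-1)^q/(2^q q! (2q+1)√(2π))`,
the Hermite coefficient of the half-space indicator. -/
theorem gaussian_cdf_hermite_coefficients :
    (∀ x : ℝ,
      cdf (gaussianReal 0 1) x =
        ((gaussianReal 0 1) {t : ℝ | t / Real.sqrt 2 + x / Real.sqrt 2 > 0}).toReal) ∧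
    (∀ q : ℕ,
      (1 / (Nat.factorial (2 * q + 1) : ℝ)) *
          ∫ t, (Polynomial.aeval t (Polynomial.hermite (2 * q + 1)) : ℝ) *
            cdf (gaussianReal 0 1) t ∂(gaussianReal 0 1)
        = ((-1 : ℝ) ^ q /
              ((2 : ℝ) ^ q * (Nat.factorial q : ℝ) * (2 * (q : ℝ) + 1) *
                Real.sqrt (2 * Real.pi))) *
            (((2 : ℝ) ^ q * Real.sqrt 2)⁻¹)) := by
  refine ⟨fun x => ?_, fun q => ?_⟩
  · have hset : {t : ℝ | t / √2 + x / √2 > 0} = Ioi (-x) := by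
      ext t
      simp [← add_div, div_pos_iff_of_pos_right, neg_lt_iff_pos_add]
    rw [hset, ← measureReal_def, cdf_gaussianReal_eq_measureReal_Ioi_neg one_ne_zero]
  · rw [integral_aeval_hermite_succ_mul_gaussianReal (2 * q)
        (hasDerivAt_cdf_gaussianReal 0 one_ne_zero) (abs_cdf_le_one γ)
        (integrable_aeval_mul_gaussianPDFReal _),
      integral_hermite_two_mul_mul_gaussianPDFReal, Nat.factorial_succ, sqrt_mul zero_le_two,
      show (4 : ℝ) = 2 * 2 by norm_num, mul_pow]
    push_cast
    field_simp
    rw [sq_sqrt zero_le_two]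

end StandardGaussian
end
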